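/- arXiv:2206.03038 — 2 statements merged into one kernel-verified Lean document; each statement's English description precedes it below -/
import Mathlib

section
/- Under Conditions (C1)–(C6), for all fixed u, v ∈ (0,1), the covariance under the permutation null distribution of Z_w^π(⌊n·u⌋) and Z_w^π(⌊n·v⌋) converges, as n → ∞, to ρ_w*(u,v) = (u∧v)(1−(u∨v))/((u∨v)(1−(u∧v))). -/
open Finset Filter Asymptotics MeasureTheory ProbabilityTheory Topology

namespace RING

/-- `U1^π(t1,t2)`: sum of `R (π i) (π j)` over indices (1-based `i,j ∈ {1,…,n}`,
represented by `Fin n` with `i` standing for index `i+1`) with `t1 < i ≤ t2` and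
`t1 < j ≤ t2`. -/
noncomputable def U1 (n : ℕ) (R : Fin n → Fin n → ℝ) (π : Equiv.Perm (Fin n))
    (t1 t2 : ℕ) : ℝ :=
  ∑ i : Fin n, ∑ j : Fin n,
    if t1 ≤ (i : ℕ) ∧ (i : ℕ) < t2 ∧ t1 ≤ (j : ℕ) ∧ (j : ℕ) < t2 then R (π i) (π j) else 0

/-- `U2^π(t1,t2)`: sum of `R (π i) (π j)` over indices with `i ≤ t1` or `i > t2`,
and `j ≤ t1` or `j > t2`. -/
noncomputable def U2 (n : ℕ) (R : Fin n → Fin n → ℝ) (π : Equiv.Perm (Fin n))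
    (t1 t2 : ℕ) : ℝ :=
  ∑ i : Fin n, ∑ j : Fin n,
    if ((i : ℕ) < t1 ∨ t2 ≤ (i : ℕ)) ∧ ((j : ℕ) < t1 ∨ t2 ≤ (j : ℕ)) then R (π i) (π j) else 0

/-- Expectation under the permutation null distribution (uniform over all `n!`
permutations). -/
noncomputable def pexp (n : ℕ) (f : Equiv.Perm (Fin n) → ℝ) : ℝ :=
  (∑ π : Equiv.Perm (Fin n), f π) / (Nat.factorial n)

/-- Variance under the permutation null distribution. -/
noncomputable def pvar (n : ℕ) (f : Equiv.Perm (Fin n) → ℝ) : ℝ :=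
  pexp n (fun π => (f π - pexp n f) ^ 2)

/-- Covariance under the permutation null distribution. -/
noncomputable def pcov (n : ℕ) (f g : Equiv.Perm (Fin n) → ℝ) : ℝ :=
  pexp n (fun π => (f π - pexp n f) * (g π - pexp n g))

/-- `R̄_{i·} = (Σ_j R_{ij})/(n-1)`. -/
noncomputable def Rbar (n : ℕ) (R : Fin n → Fin n → ℝ) (i : Fin n) : ℝ :=
  (∑ j : Fin n, R i j) / ((n : ℝ) - 1)

/-- `r0 = (1/n) Σ_i R̄_{i·}`. -/
noncomputable def r0 (n : ℕ) (R : Fin n → Fin n → ℝ) : ℝ :=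
  (∑ i : Fin n, Rbar n R i) / n

/-- `r1² = (1/n) Σ_i R̄_{i·}²`. -/
noncomputable def r1sq (n : ℕ) (R : Fin n → Fin n → ℝ) : ℝ :=
  (∑ i : Fin n, (Rbar n R i) ^ 2) / n

/-- `r_d² = (1/(n(n-1))) Σ_i Σ_j R_{ij}²`. -/
noncomputable def rdsq (n : ℕ) (R : Fin n → Fin n → ℝ) : ℝ :=
  (∑ i : Fin n, ∑ j : Fin n, (R i j) ^ 2) / ((n : ℝ) * ((n : ℝ) - 1))

/-- `U_diff^π = U1^π − U2^π`. -/
noncomputable def Udiff (n : ℕ) (R : Fin n → Fin n → ℝ) (π : Equiv.Perm (Fin n))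
    (t1 t2 : ℕ) : ℝ :=
  U1 n R π t1 t2 - U2 n R π t1 t2

/-- `U_w^π = ((n−t2+t1−1)·U1^π + (t2−t1−1)·U2^π)/(n−2)`. -/
noncomputable def Uw (n : ℕ) (R : Fin n → Fin n → ℝ) (π : Equiv.Perm (Fin n))
    (t1 t2 : ℕ) : ℝ :=
  (((n : ℝ) - t2 + t1 - 1) * U1 n R π t1 t2 + ((t2 : ℝ) - t1 - 1) * U2 n R π t1 t2) /
    ((n : ℝ) - 2)

/-- Standardized `Z_w^π(t1,t2)`. -/
noncomputable def Zw (n : ℕ) (R : Fin n → Fin n → ℝ) (π : Equiv.Perm (Fin n))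
    (t1 t2 : ℕ) : ℝ :=
  (Uw n R π t1 t2 - pexp n (fun σ => Uw n R σ t1 t2)) /
    Real.sqrt (pvar n (fun σ => Uw n R σ t1 t2))

/-- Standardized `Z_diff^π(t1,t2)`. -/
noncomputable def Zdiff (n : ℕ) (R : Fin n → Fin n → ℝ) (π : Equiv.Perm (Fin n))
    (t1 t2 : ℕ) : ℝ :=
  (Udiff n R π t1 t2 - pexp n (fun σ => Udiff n R σ t1 t2)) /
    Real.sqrt (pvar n (fun σ => Udiff n R σ t1 t2))

/-- Discrete σ-algebra on the finite permutation group. -/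
instance (n : ℕ) : MeasurableSpace (Equiv.Perm (Fin n)) := ⊤

/-- The permutation null distribution: the uniform probability measure on the
`n!` permutations of `{1,…,n}`. -/
noncomputable def permP (n : ℕ) : ProbabilityMeasure (Equiv.Perm (Fin n)) :=
  ⟨(PMF.uniformOfFintype (Equiv.Perm (Fin n))).toMeasure,
    PMF.toMeasure.isProbabilityMeasure _⟩

/-- The distribution of a real-valued statistic under the permutation null
distribution. -/
noncomputable def permDist (n : ℕ) (f : Equiv.Perm (Fin n) → ℝ) : ProbabilityMeasure ℝ :=
  (permP n).map (f := f) (Measurable.aemeasurable (fun _ _ => trivial))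

/-- The centered Gaussian distribution on `ℝ` with variance `v` (for `v ≥ 0`). -/
noncomputable def gaussLimit (v : ℝ) : ProbabilityMeasure ℝ :=
  ⟨gaussianReal 0 (Real.toNNReal v), inferInstance⟩

/-- `ρ_w*(u,v) = (u∧v)(1−(u∨v))/((u∨v)(1−(u∧v)))`. -/
noncomputable def rhoW (u v : ℝ) : ℝ :=
  (min u v * (1 - max u v)) / (max u v * (1 - min u v))

/-- `ρ_diff*(u,v) = (u∧v)(1−(u∨v))/√((u∧v)(1−(u∧v))·(u∨v)(1−(u∨v)))`. -/
noncomputable def rhoDiff (u v : ℝ) : ℝ :=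
  (min u v * (1 - max u v)) /
    Real.sqrt (min u v * (1 - min u v) * (max u v * (1 - max u v)))

/-- Condition (C1): `Σ_i (Σ_j R_{ij}²)² = O(n³ r_d⁴)`. -/
def Cond1 (R : (n : ℕ) → Fin n → Fin n → ℝ) : Prop :=
  (fun n => ∑ i : Fin n, (∑ j : Fin n, (R n i j) ^ 2) ^ 2)
    =O[atTop] fun n => (n : ℝ) ^ 3 * (rdsq n (R n)) ^ 2

/-- Condition (C2): `Σ_i |R̄_{i·} − r0|³ = o((n(r1² − r0²))^{3/2})`. -/
def Cond2 (R : (n : ℕ) → Fin n → Fin n → ℝ) : Prop :=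
  (fun n => ∑ i : Fin n, |Rbar n (R n) i - r0 n (R n)| ^ 3)
    =o[atTop] fun n => ((n : ℝ) * (r1sq n (R n) - (r0 n (R n)) ^ 2)) ^ ((3 : ℝ) / 2)

/-- Condition (C3): `Σ_i (R̄_{i·} − r0)³ = o(n·r_d·(r1² − r0²))`. -/
def Cond3 (R : (n : ℕ) → Fin n → Fin n → ℝ) : Prop :=
  (fun n => ∑ i : Fin n, (Rbar n (R n) i - r0 n (R n)) ^ 3)
    =o[atTop] fun n =>
      (n : ℝ) * Real.sqrt (rdsq n (R n)) * (r1sq n (R n) - (r0 n (R n)) ^ 2)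

/-- Condition (C4): `|Σ_{i≠j≠k} R_{ji} R_{ik} (R̄_{j·} − r0)(R̄_{k·} − r0)| =
o(n³ r_d² (r1² − r0²))`. -/
def Cond4 (R : (n : ℕ) → Fin n → Fin n → ℝ) : Prop :=
  (fun n =>
      |∑ i : Fin n, ∑ j : Fin n, ∑ k : Fin n,
        if i ≠ j ∧ i ≠ k ∧ j ≠ k then
          R n j i * R n i k * (Rbar n (R n) j - r0 n (R n)) * (Rbar n (R n) k - r0 n (R n))
        else 0|)
    =o[atTop] fun n => (n : ℝ) ^ 3 * rdsq n (R n) * (r1sq n (R n) - (r0 n (R n)) ^ 2)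

/-- Condition (C5): `Σ_i Σ_j Σ_{k∉{i,j}} Σ_{l∉{i,j}} R_{ij} R_{kl}
(R_{ik} R_{jl} + R_{il} R_{jk}) = o(n⁴ r_d⁴)`. -/
def Cond5 (R : (n : ℕ) → Fin n → Fin n → ℝ) : Prop :=
  (fun n =>
      ∑ i : Fin n, ∑ j : Fin n, ∑ k : Fin n, ∑ l : Fin n,
        if k ≠ i ∧ k ≠ j ∧ l ≠ i ∧ l ≠ j then
          R n i j * R n k l * (R n i k * R n j l + R n i l * R n j k)
        else 0)
    =o[atTop] fun n => (n : ℝ) ^ 4 * (rdsq n (R n)) ^ 2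

/-- Condition (C6): `r1 = o(r_d)`. -/
def Cond6 (R : (n : ℕ) → Fin n → Fin n → ℝ) : Prop :=
  (fun n => Real.sqrt (r1sq n (R n))) =o[atTop] fun n => Real.sqrt (rdsq n (R n))

end RING

open RING


open Finset Filter

namespace RINGAux

variable {n : ℕ}

/-- Permutations of `Fin n` fixing all indices `≥ t`. -/
def Hset (n t : ℕ) : Finset (Equiv.Perm (Fin n)) :=
  Finset.univ.filter fun σ => ∀ k : Fin n, t ≤ (k : ℕ) → σ k = k

/-- Indices `< t`. -/
def Tset (n t : ℕ) : Finset (Fin n) := Finset.univ.filter fun i => (i : ℕ) < t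

/-- Indices `≥ t`. -/
def Cset (n t : ℕ) : Finset (Fin n) := Finset.univ.filter fun i => t ≤ (i : ℕ)

lemma mem_Hset {t : ℕ} {σ : Equiv.Perm (Fin n)} :
    σ ∈ Hset n t ↔ ∀ k : Fin n, t ≤ (k : ℕ) → σ k = k := by
  simp [Hset]

lemma mem_Tset {t : ℕ} {i : Fin n} : i ∈ Tset n t ↔ (i : ℕ) < t := by simp [Tset]

lemma mem_Cset {t : ℕ} {i : Fin n} : i ∈ Cset n t ↔ t ≤ (i : ℕ) := by simp [Cset]

lemma one_mem_Hset (t : ℕ) : (1 : Equiv.Perm (Fin n)) ∈ Hset n t :=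
  mem_Hset.2 fun _ _ => rfl

lemma mul_mem_Hset {t : ℕ} {σ τ : Equiv.Perm (Fin n)} (hσ : σ ∈ Hset n t)
    (hτ : τ ∈ Hset n t) : σ * τ ∈ Hset n t := by
  rw [mem_Hset] at *
  intro k hk
  simp [Equiv.Perm.mul_apply, hτ k hk, hσ k hk]

lemma inv_mem_Hset {t : ℕ} {σ : Equiv.Perm (Fin n)} (hσ : σ ∈ Hset n t) :
    σ⁻¹ ∈ Hset n t := by
  rw [mem_Hset] at *
  intro k hk
  conv_lhs => rw [← hσ k hk]
  simp

lemma Hset_lt_iff {t : ℕ} {σ : Equiv.Perm (Fin n)} (hσ : σ ∈ Hset n t) (i : Fin n) :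
    (σ i : ℕ) < t ↔ (i : ℕ) < t := by
  rw [mem_Hset] at hσ
  constructor
  · intro h
    by_contra hi
    push_neg at hi
    rw [hσ i hi] at h
    omega
  · intro h
    by_contra hi
    push_neg at hi
    have := hσ (σ i) hi
    have : σ i = i := σ.injective this
    omega

lemma swap_mem_Hset {t : ℕ} {i j : Fin n} (hi : (i : ℕ) < t) (hj : (j : ℕ) < t) :
    Equiv.swap i j ∈ Hset n t := by
  rw [mem_Hset]
  intro k hk
  apply Equiv.swap_apply_of_ne_of_ne
  · rintro rfl; omega
  · rintro rfl; omega

lemma card_Tset {t : ℕ} (h : t ≤ n) : (Tset n t).card = t := by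
  rw [← Finset.card_range t]
  apply Finset.card_bij (fun (i : Fin n) _ => (i : ℕ))
  · intro a ha; simp [mem_Tset] at ha; simp [ha]
  · intro a _ b _ hab; exact Fin.ext hab
  · intro b hb; simp at hb
    exact ⟨⟨b, lt_of_lt_of_le hb h⟩, by simp [mem_Tset, hb], rfl⟩

/-- Sums over `Tset` are invariant under permutations in `Hset`. -/
lemma sum_Tset_inv {t : ℕ} {σ : Equiv.Perm (Fin n)} (hσ : σ ∈ Hset n t)
    (h : Fin n → ℝ) : ∑ a ∈ Tset n t, h (σ a) = ∑ a ∈ Tset n t, h a := by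
  refine Finset.sum_equiv σ (fun i => ?_) (fun i _ => rfl)
  simp only [mem_Tset]
  exact (Hset_lt_iff hσ i).symm

/-- Right multiplication by a member of `Hset` permutes `Hset`. -/
lemma sum_Hset_mul_right {t : ℕ} {τ : Equiv.Perm (Fin n)} (hτ : τ ∈ Hset n t)
    (G : Equiv.Perm (Fin n) → ℝ) :
    ∑ σ ∈ Hset n t, G (σ * τ) = ∑ σ ∈ Hset n t, G σ := by
  apply Finset.sum_bij' (fun σ _ => σ * τ) (fun σ _ => σ * τ⁻¹)
  · intro a ha; exact mul_mem_Hset ha hτ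
  · intro a ha; exact mul_mem_Hset ha (inv_mem_Hset hτ)
  · intro a _; group
  · intro a _; group
  · intro a _; rfl

end RINGAux
namespace RINGAux

variable {n : ℕ}

/-- Constancy of `∑_{σ∈H} h (σ i)` over `i` with `↑i < t`. -/
lemma sum_Hset_single_const {t : ℕ} {i i' : Fin n} (hi : (i : ℕ) < t)
    (hi' : (i' : ℕ) < t) (h : Fin n → ℝ) :
    ∑ σ ∈ Hset n t, h (σ i) = ∑ σ ∈ Hset n t, h (σ i') := by
  have hτ : Equiv.swap i' i ∈ Hset n t := swap_mem_Hset hi' hi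
  calc ∑ σ ∈ Hset n t, h (σ i)
      = ∑ σ ∈ Hset n t, h ((σ * Equiv.swap i' i) i') := by
        refine Finset.sum_congr rfl fun σ _ => ?_
        simp [Equiv.Perm.mul_apply, Equiv.swap_apply_left]
    _ = ∑ σ ∈ Hset n t, h (σ i') := sum_Hset_mul_right hτ (fun σ => h (σ i'))

/-- Averaging lemma, single index. -/
lemma sum_Hset_single {t : ℕ} (htn : t ≤ n) {i : Fin n} (hi : (i : ℕ) < t)
    (h : Fin n → ℝ) :
    (t : ℝ) * ∑ σ ∈ Hset n t, h (σ i)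
      = ((Hset n t).card : ℝ) * ∑ a ∈ Tset n t, h a := by
  have key : ∑ i' ∈ Tset n t, ∑ σ ∈ Hset n t, h (σ i')
      = (Tset n t).card • ∑ σ ∈ Hset n t, h (σ i) := by
    rw [Finset.sum_congr rfl fun i' hi' =>
      (sum_Hset_single_const (mem_Tset.1 hi') hi h), Finset.sum_const]
  have key2 : ∑ i' ∈ Tset n t, ∑ σ ∈ Hset n t, h (σ i')
      = ((Hset n t).card) • ∑ a ∈ Tset n t, h a := by
    rw [Finset.sum_comm]
    rw [Finset.sum_congr rfl fun σ hσ => sum_Tset_inv hσ h, Finset.sum_const]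
  have h3 := key.symm.trans key2
  rw [card_Tset htn] at h3
  rw [nsmul_eq_mul, nsmul_eq_mul] at h3
  rw [h3]

/-- Constancy of `∑_{σ∈H} g (σ i) (σ j)` over distinct pairs below `t`. -/
lemma sum_Hset_pair_const {t : ℕ} {i j i' j' : Fin n} (hi : (i : ℕ) < t)
    (hj : (j : ℕ) < t) (hij : i ≠ j) (hi' : (i' : ℕ) < t) (hj' : (j' : ℕ) < t)
    (hij' : i' ≠ j') (g : Fin n → Fin n → ℝ) :
    ∑ σ ∈ Hset n t, g (σ i) (σ j) = ∑ σ ∈ Hset n t, g (σ i') (σ j') := by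
  obtain ⟨τ, hτmem, hτi', hτj'⟩ :
      ∃ τ : Equiv.Perm (Fin n), τ ∈ Hset n t ∧ τ i' = i ∧ τ j' = j := by
    refine ⟨Equiv.swap ((Equiv.swap i' i) j') j * Equiv.swap i' i, ?_, ?_, ?_⟩
    · have hj₂t : (((Equiv.swap i' i) j' : Fin n) : ℕ) < t := by
        rcases eq_or_ne j' i' with h1 | h1
        · rw [h1, Equiv.swap_apply_left]; exact hi
        · rcases eq_or_ne j' i with h2 | h2
          · rw [h2, Equiv.swap_apply_right]; exact hi'
          · rw [Equiv.swap_apply_of_ne_of_ne h1 h2]; exact hj'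
      exact mul_mem_Hset (swap_mem_Hset hj₂t hj) (swap_mem_Hset hi' hi)
    · have hij₂ : i ≠ (Equiv.swap i' i) j' := by
        intro h
        have h2 := congrArg (Equiv.swap i' i) h
        rw [Equiv.swap_apply_self, Equiv.swap_apply_right] at h2
        exact hij' h2
      show (Equiv.swap ((Equiv.swap i' i) j') j) ((Equiv.swap i' i) i') = i
      rw [Equiv.swap_apply_left]
      exact Equiv.swap_apply_of_ne_of_ne hij₂ hij
    · show (Equiv.swap ((Equiv.swap i' i) j') j) ((Equiv.swap i' i) j') = j
      exact Equiv.swap_apply_left _ _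
  calc ∑ σ ∈ Hset n t, g (σ i) (σ j)
      = ∑ σ ∈ Hset n t, g ((σ * τ) i') ((σ * τ) j') := by
        refine Finset.sum_congr rfl fun σ _ => ?_
        simp [Equiv.Perm.mul_apply, hτi', hτj']
    _ = ∑ σ ∈ Hset n t, g (σ i') (σ j') :=
        sum_Hset_mul_right hτmem (fun σ => g (σ i') (σ j'))

/-- Invariance of the off-diagonal double sum over `Tset` under `σ ∈ Hset`. -/
lemma sum_pairs_inv {t : ℕ} {σ : Equiv.Perm (Fin n)} (hσ : σ ∈ Hset n t)
    (g : Fin n → Fin n → ℝ) :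
    ∑ a ∈ Tset n t, ∑ b ∈ (Tset n t).erase a, g (σ a) (σ b)
      = ∑ a ∈ Tset n t, ∑ b ∈ (Tset n t).erase a, g a b := by
  have inner : ∀ a : Fin n, ∑ b ∈ (Tset n t).erase a, g (σ a) (σ b)
      = ∑ b ∈ (Tset n t).erase (σ a), g (σ a) b := by
    intro a
    refine Finset.sum_equiv σ (fun b => ?_) (fun b _ => rfl)
    simp only [Finset.mem_erase, mem_Tset]
    constructor
    · rintro ⟨hba, hb⟩
      exact ⟨fun h => hba (σ.injective h), (Hset_lt_iff hσ b).2 hb⟩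
    · rintro ⟨hba, hb⟩
      exact ⟨fun h => hba (by rw [h]), (Hset_lt_iff hσ b).1 hb⟩
  calc ∑ a ∈ Tset n t, ∑ b ∈ (Tset n t).erase a, g (σ a) (σ b)
      = ∑ a ∈ Tset n t, ∑ b ∈ (Tset n t).erase (σ a), g (σ a) b :=
        Finset.sum_congr rfl fun a _ => inner a
    _ = ∑ a ∈ Tset n t, ∑ b ∈ (Tset n t).erase a, g a b :=
        sum_Tset_inv hσ (fun a => ∑ b ∈ (Tset n t).erase a, g a b)

/-- Averaging lemma, pairs. -/
lemma sum_Hset_pair {t : ℕ} (htn : t ≤ n) {i j : Fin n} (hi : (i : ℕ) < t)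
    (hj : (j : ℕ) < t) (hij : i ≠ j) (g : Fin n → Fin n → ℝ) :
    (t : ℝ) * ((t : ℝ) - 1) * ∑ σ ∈ Hset n t, g (σ i) (σ j)
      = ((Hset n t).card : ℝ) * ∑ a ∈ Tset n t, ∑ b ∈ (Tset n t).erase a, g a b := by
  have ht1 : 1 ≤ t := by omega
  have key : ∑ i' ∈ Tset n t, ∑ j' ∈ (Tset n t).erase i',
      (∑ σ ∈ Hset n t, g (σ i') (σ j'))
      = ((t : ℝ) * ((t:ℝ) - 1)) * ∑ σ ∈ Hset n t, g (σ i) (σ j) := by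
    calc ∑ i' ∈ Tset n t, ∑ j' ∈ (Tset n t).erase i',
          (∑ σ ∈ Hset n t, g (σ i') (σ j'))
        = ∑ i' ∈ Tset n t, ∑ _j' ∈ (Tset n t).erase i',
          (∑ σ ∈ Hset n t, g (σ i) (σ j)) := by
          refine Finset.sum_congr rfl fun i' hi' => Finset.sum_congr rfl fun j' hj' => ?_
          rcases Finset.mem_erase.1 hj' with ⟨hne, hj'2⟩
          exact sum_Hset_pair_const (mem_Tset.1 hi') (mem_Tset.1 hj'2)
            (Ne.symm hne) hi hj hij g
      _ = ∑ i' ∈ Tset n t, ((t - 1 : ℕ)) • (∑ σ ∈ Hset n t, g (σ i) (σ j)) := by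
          refine Finset.sum_congr rfl fun i' hi' => ?_
          rw [Finset.sum_const, Finset.card_erase_of_mem hi', card_Tset htn]
      _ = ((t : ℝ) * ((t:ℝ) - 1)) * ∑ σ ∈ Hset n t, g (σ i) (σ j) := by
          rw [Finset.sum_const, card_Tset htn, smul_smul, nsmul_eq_mul]
          congr 1
          push_cast [Nat.cast_sub ht1]
          ring
  have key2 : ∑ i' ∈ Tset n t, ∑ j' ∈ (Tset n t).erase i',
      (∑ σ ∈ Hset n t, g (σ i') (σ j'))
      = ((Hset n t).card : ℝ) * ∑ a ∈ Tset n t, ∑ b ∈ (Tset n t).erase a, g a b := by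
    calc ∑ i' ∈ Tset n t, ∑ j' ∈ (Tset n t).erase i',
          (∑ σ ∈ Hset n t, g (σ i') (σ j'))
        = ∑ i' ∈ Tset n t, ∑ σ ∈ Hset n t, ∑ j' ∈ (Tset n t).erase i',
          g (σ i') (σ j') := Finset.sum_congr rfl fun _ _ => Finset.sum_comm
      _ = ∑ σ ∈ Hset n t, ∑ i' ∈ Tset n t, ∑ j' ∈ (Tset n t).erase i',
          g (σ i') (σ j') := Finset.sum_comm
      _ = ∑ _σ ∈ Hset n t, ∑ a ∈ Tset n t, ∑ b ∈ (Tset n t).erase a, g a b :=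
          Finset.sum_congr rfl fun σ hσ => sum_pairs_inv hσ g
      _ = ((Hset n t).card : ℝ) * ∑ a ∈ Tset n t, ∑ b ∈ (Tset n t).erase a, g a b := by
          rw [Finset.sum_const, nsmul_eq_mul]
  rw [← key, key2]

end RINGAux
namespace RINGAux

open RING

variable {n : ℕ} (R : Fin n → Fin n → ℝ)

lemma double_if_eq (P : Fin n → Prop) [DecidablePred P] (f : Fin n → Fin n → ℝ) :
    (∑ i : Fin n, ∑ j : Fin n, if P i ∧ P j then f i j else 0)
      = ∑ i ∈ Finset.univ.filter P, ∑ j ∈ Finset.univ.filter P, f i j := by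
  rw [Finset.sum_filter]
  refine Finset.sum_congr rfl fun i _ => ?_
  rw [Finset.sum_filter]
  by_cases h : P i
  · simp only [h, if_true, true_and]
  · simp [h]

lemma U1_eq (π : Equiv.Perm (Fin n)) (s : ℕ) :
    U1 n R π 0 s = ∑ i ∈ Tset n s, ∑ j ∈ Tset n s, R (π i) (π j) := by
  unfold U1
  simp only [Nat.zero_le, true_and]
  exact double_if_eq (fun i => (i : ℕ) < s) (fun i j => R (π i) (π j))

lemma U2_eq (π : Equiv.Perm (Fin n)) (s : ℕ) :
    U2 n R π 0 s = ∑ i ∈ Cset n s, ∑ j ∈ Cset n s, R (π i) (π j) := by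
  unfold U2
  simp only [Nat.not_lt_zero, false_or]
  exact double_if_eq (fun i => s ≤ (i : ℕ)) (fun i j => R (π i) (π j))

/-- Off-diagonal rewriting of a symmetric double sum with zero diagonal. -/
lemma double_sum_erase (hdiag : ∀ i, R i i = 0) (π : Equiv.Perm (Fin n))
    (F : Finset (Fin n)) :
    ∑ i ∈ F, ∑ j ∈ F, R (π i) (π j)
      = ∑ i ∈ F, ∑ j ∈ F.erase i, R (π i) (π j) := by
  refine Finset.sum_congr rfl fun i hi => ?_
  rw [← Finset.add_sum_erase F _ hi, hdiag (π i), zero_add]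

end RINGAux
namespace RINGAux

open RING

variable {n : ℕ}

lemma sum_sum_erase_const {α : Type*} [DecidableEq α] (F : Finset α) (c : ℝ) :
    ∑ i ∈ F, ∑ _j ∈ F.erase i, c = (F.card : ℝ) * ((F.card : ℝ) - 1) * c := by
  rcases Nat.eq_zero_or_pos F.card with h | h
  · rw [Finset.card_eq_zero] at h; subst h; simp
  · have : ∀ i ∈ F, ∑ _j ∈ F.erase i, c = ((F.card - 1 : ℕ) : ℝ) * c := by
      intro i hi
      rw [Finset.sum_const, Finset.card_erase_of_mem hi, nsmul_eq_mul]
    rw [Finset.sum_congr rfl this, Finset.sum_const, nsmul_eq_mul,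
      Nat.cast_sub h]
    push_cast
    ring

lemma sum_comm_dep {α β γ : Type*} (H : Finset β) (F : Finset α) (G : α → Finset γ)
    (f : β → α → γ → ℝ) :
    ∑ σ ∈ H, ∑ a ∈ F, ∑ b ∈ G a, f σ a b
      = ∑ a ∈ F, ∑ b ∈ G a, ∑ σ ∈ H, f σ a b := by
  rw [Finset.sum_comm]
  exact Finset.sum_congr rfl fun a _ => Finset.sum_comm

lemma mul_sum_sum {α γ : Type*} (c : ℝ) (F : Finset α) (G : α → Finset γ)
    (f : α → γ → ℝ) :
    c * ∑ a ∈ F, ∑ b ∈ G a, f a b = ∑ a ∈ F, ∑ b ∈ G a, c * f a b := by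
  rw [Finset.mul_sum]
  exact Finset.sum_congr rfl fun a _ => Finset.mul_sum _ _ _

variable (R : Fin n → Fin n → ℝ)

/-- The middle block of indices `s ≤ i < t`. -/
def Mset (n s t : ℕ) : Finset (Fin n) := (Cset n s).filter fun i => (i : ℕ) < t

lemma mem_Mset {s t : ℕ} {i : Fin n} : i ∈ Mset n s t ↔ s ≤ (i : ℕ) ∧ (i : ℕ) < t := by
  simp [Mset, mem_Cset]

lemma card_Mset {s t : ℕ} (hst : s ≤ t) (htn : t ≤ n) :
    (Mset n s t).card = t - s := by
  have h1 : Mset n s t = Tset n t \ Tset n s := by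
    ext i; simp only [mem_Mset, Finset.mem_sdiff, mem_Tset]; omega
  have h2 : Tset n s ⊆ Tset n t := fun i hi => mem_Tset.2 (lt_of_lt_of_le (mem_Tset.1 hi) hst)
  rw [h1, Finset.card_sdiff_of_subset h2, card_Tset htn, card_Tset (hst.trans htn)]

lemma sum_univ_split (t : ℕ) (f : Fin n → ℝ) :
    ∑ i : Fin n, f i = ∑ i ∈ Tset n t, f i + ∑ i ∈ Cset n t, f i := by
  have h : Finset.univ.filter (fun i : Fin n => ¬ (i : ℕ) < t) = Cset n t := by
    ext i; simp [Cset, Nat.not_lt]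
  rw [← Finset.sum_filter_add_sum_filter_not Finset.univ (fun i : Fin n => (i : ℕ) < t) f, h]
  rfl

lemma sum_Cs_split {s t : ℕ} (hst : s ≤ t) (f : Fin n → ℝ) :
    ∑ i ∈ Cset n s, f i = ∑ i ∈ Mset n s t, f i + ∑ i ∈ Cset n t, f i := by
  have h : (Cset n s).filter (fun i : Fin n => ¬ (i : ℕ) < t) = Cset n t := by
    ext i; simp only [Finset.mem_filter, mem_Cset, Nat.not_lt]
    omega
  rw [← Finset.sum_filter_add_sum_filter_not (Cset n s) (fun i : Fin n => (i : ℕ) < t) f, h]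
  rfl

/-- Total sum invariance. -/
lemma total_inv (π : Equiv.Perm (Fin n)) :
    ∑ i : Fin n, ∑ j : Fin n, R (π i) (π j) = ∑ i : Fin n, ∑ j : Fin n, R i j := by
  calc ∑ i : Fin n, ∑ j : Fin n, R (π i) (π j)
      = ∑ i : Fin n, ∑ j : Fin n, R i (π j) :=
        Equiv.sum_comp π (fun a => ∑ j : Fin n, R a (π j))
    _ = ∑ i : Fin n, ∑ j : Fin n, R i j :=
        Finset.sum_congr rfl fun i _ => Equiv.sum_comp π (R i)

/-- Block decomposition of the total sum. -/
lemma block_decomp (t : ℕ) (π : Equiv.Perm (Fin n)) :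
    (∑ i : Fin n, ∑ j : Fin n, R i j)
      = (∑ i ∈ Tset n t, ∑ j ∈ Tset n t, R (π i) (π j))
        + (∑ i ∈ Tset n t, ∑ j ∈ Cset n t, R (π i) (π j))
        + (∑ i ∈ Cset n t, ∑ j ∈ Tset n t, R (π i) (π j))
        + (∑ i ∈ Cset n t, ∑ j ∈ Cset n t, R (π i) (π j)) := by
  rw [← total_inv R π, sum_univ_split t (fun i => ∑ j : Fin n, R (π i) (π j))]
  rw [Finset.sum_congr rfl fun i (_ : i ∈ Tset n t) => sum_univ_split t (fun j => R (π i) (π j)),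
    Finset.sum_congr rfl fun i (_ : i ∈ Cset n t) => sum_univ_split t (fun j => R (π i) (π j)),
    Finset.sum_add_distrib, Finset.sum_add_distrib]
  ring

end RINGAux
namespace RINGAux

open RING

variable {n : ℕ} (R : Fin n → Fin n → ℝ)

/-- σ-average of `U1` at time `s`, given the first `t` positions. -/
lemma avg_U1 (hdiag : ∀ i, R i i = 0) {s t : ℕ} (hst : s ≤ t) (htn : t ≤ n)
    (π : Equiv.Perm (Fin n)) :
    (t : ℝ) * ((t : ℝ) - 1) * ∑ σ ∈ Hset n t, U1 n R (π * σ) 0 s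
      = ((Hset n t).card : ℝ) * ((s : ℝ) * ((s : ℝ) - 1) * U1 n R π 0 t) := by
  have hrw : ∀ σ ∈ Hset n t, U1 n R (π * σ) 0 s
      = ∑ i ∈ Tset n s, ∑ j ∈ (Tset n s).erase i, R (π (σ i)) (π (σ j)) := by
    intro σ _
    rw [U1_eq, double_sum_erase R hdiag (π * σ)]
    rfl
  rw [Finset.sum_congr rfl hrw, sum_comm_dep, mul_sum_sum]
  have hpair : ∀ i ∈ Tset n s, ∀ j ∈ (Tset n s).erase i,
      (t : ℝ) * ((t : ℝ) - 1) * ∑ σ ∈ Hset n t, R (π (σ i)) (π (σ j))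
        = ((Hset n t).card : ℝ)
          * ∑ a ∈ Tset n t, ∑ b ∈ (Tset n t).erase a, R (π a) (π b) := by
    intro i hi j hj
    rcases Finset.mem_erase.1 hj with ⟨hne, hj2⟩
    exact sum_Hset_pair htn (lt_of_lt_of_le (mem_Tset.1 hi) hst)
      (lt_of_lt_of_le (mem_Tset.1 hj2) hst) (Ne.symm hne) (fun a b => R (π a) (π b))
  calc ∑ i ∈ Tset n s, ∑ j ∈ (Tset n s).erase i,
        (t : ℝ) * ((t : ℝ) - 1) * ∑ σ ∈ Hset n t, R (π (σ i)) (π (σ j))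
      = ∑ i ∈ Tset n s, ∑ _j ∈ (Tset n s).erase i, ((Hset n t).card : ℝ)
          * ∑ a ∈ Tset n t, ∑ b ∈ (Tset n t).erase a, R (π a) (π b) := by
        refine Finset.sum_congr rfl fun i hi => Finset.sum_congr rfl fun j hj => ?_
        exact hpair i hi j hj
    _ = ((Tset n s).card : ℝ) * (((Tset n s).card : ℝ) - 1) * (((Hset n t).card : ℝ)
          * ∑ a ∈ Tset n t, ∑ b ∈ (Tset n t).erase a, R (π a) (π b)) :=
        sum_sum_erase_const _ _
    _ = ((Hset n t).card : ℝ) * ((s : ℝ) * ((s : ℝ) - 1) * U1 n R π 0 t) := by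
        rw [card_Tset (hst.trans htn), U1_eq, double_sum_erase R hdiag π]
        ring

/-- σ-average of `U2` at time `s`, given the first `t` positions. -/
lemma avg_U2 (hdiag : ∀ i, R i i = 0) {s t : ℕ} (hst : s ≤ t) (htn : t ≤ n)
    (π : Equiv.Perm (Fin n)) :
    (t : ℝ) * ((t : ℝ) - 1) * ∑ σ ∈ Hset n t, U2 n R (π * σ) 0 s
      = ((Hset n t).card : ℝ) *
        ( ((t : ℝ) - (s : ℝ)) * ((t : ℝ) - (s : ℝ) - 1) * U1 n R π 0 t
          + ((t : ℝ) - 1) * ((t : ℝ) - (s : ℝ)) *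
            ((∑ a ∈ Tset n t, ∑ b ∈ Cset n t, R (π a) (π b))
              + ∑ a ∈ Cset n t, ∑ b ∈ Tset n t, R (π a) (π b))
          + (t : ℝ) * ((t : ℝ) - 1) * U2 n R π 0 t ) := by
  have hMlt : ∀ i ∈ Mset n s t, (i : ℕ) < t := fun i hi => (mem_Mset.1 hi).2
  have hCfix : ∀ (σ : Equiv.Perm (Fin n)), σ ∈ Hset n t →
      ∀ i ∈ Cset n t, σ i = i := fun σ hσ i hi => mem_Hset.1 hσ i (mem_Cset.1 hi)
  -- decompose U2 (π σ) 0 s into four blocks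
  have hrw : ∀ σ ∈ Hset n t, U2 n R (π * σ) 0 s
      = (∑ i ∈ Mset n s t, ∑ j ∈ (Mset n s t).erase i, R (π (σ i)) (π (σ j)))
        + (∑ i ∈ Mset n s t, ∑ j ∈ Cset n t, R (π (σ i)) (π j))
        + (∑ i ∈ Cset n t, ∑ j ∈ Mset n s t, R (π i) (π (σ j)))
        + U2 n R π 0 t := by
    intro σ hσ
    rw [U2_eq]
    have expand : ∀ i : Fin n, ∑ j ∈ Cset n s, R ((π * σ) i) ((π * σ) j)
        = (∑ j ∈ Mset n s t, R (π (σ i)) (π (σ j)))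
          + ∑ j ∈ Cset n t, R (π (σ i)) (π j) := by
      intro i
      rw [sum_Cs_split hst (fun j => R ((π * σ) i) ((π * σ) j))]
      congr 1
      refine Finset.sum_congr rfl fun j hj => ?_
      show R (π (σ i)) (π (σ j)) = R (π (σ i)) (π j)
      rw [hCfix σ hσ j hj]
    rw [sum_Cs_split hst (fun i => ∑ j ∈ Cset n s, R ((π * σ) i) ((π * σ) j))]
    rw [Finset.sum_congr rfl (fun i (_ : i ∈ Mset n s t) => expand i),
      Finset.sum_congr rfl (fun i (_ : i ∈ Cset n t) => expand i),
      Finset.sum_add_distrib, Finset.sum_add_distrib]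
    have e1 : ∑ i ∈ Mset n s t, ∑ j ∈ Mset n s t, R (π (σ i)) (π (σ j))
        = ∑ i ∈ Mset n s t, ∑ j ∈ (Mset n s t).erase i, R (π (σ i)) (π (σ j)) := by
      refine Finset.sum_congr rfl fun i hi => ?_
      rw [← Finset.add_sum_erase _ _ hi, hdiag (π (σ i)), zero_add]
    have e2 : ∑ i ∈ Cset n t, ∑ j ∈ Cset n t, R (π (σ i)) (π j)
        = U2 n R π 0 t := by
      rw [U2_eq]
      refine Finset.sum_congr rfl fun i hi => Finset.sum_congr rfl fun j _ => ?_
      rw [hCfix σ hσ i hi]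
    have e3 : ∀ i ∈ Cset n t, ∀ j : Fin n, R (π (σ i)) (π (σ j)) = R (π i) (π (σ j)) := by
      intro i hi j
      rw [hCfix σ hσ i hi]
    rw [e1, e2]
    rw [Finset.sum_congr rfl (fun i (hi : i ∈ Cset n t) =>
      Finset.sum_congr rfl fun j (_ : j ∈ Mset n s t) => e3 i hi j)]
    ring
  rw [Finset.sum_congr rfl hrw]
  simp only [Finset.sum_add_distrib]
  -- handle each of the four σ-sums
  have hP4 : ∑ _σ ∈ Hset n t, U2 n R π 0 t = ((Hset n t).card : ℝ) * U2 n R π 0 t := by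
    rw [Finset.sum_const, nsmul_eq_mul]
  -- P1 : double Mset sum
  have hP1 : (t : ℝ) * ((t : ℝ) - 1) *
      ∑ σ ∈ Hset n t, ∑ i ∈ Mset n s t, ∑ j ∈ (Mset n s t).erase i,
        R (π (σ i)) (π (σ j))
      = ((Hset n t).card : ℝ) * (((t : ℝ) - (s : ℝ)) * ((t : ℝ) - (s : ℝ) - 1)
          * U1 n R π 0 t) := by
    rw [sum_comm_dep, mul_sum_sum]
    have : ∀ i ∈ Mset n s t, ∀ j ∈ (Mset n s t).erase i,
        (t : ℝ) * ((t : ℝ) - 1) * ∑ σ ∈ Hset n t, R (π (σ i)) (π (σ j))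
          = ((Hset n t).card : ℝ)
            * ∑ a ∈ Tset n t, ∑ b ∈ (Tset n t).erase a, R (π a) (π b) := by
      intro i hi j hj
      rcases Finset.mem_erase.1 hj with ⟨hne, hj2⟩
      exact sum_Hset_pair htn (hMlt i hi) (hMlt j hj2) (Ne.symm hne)
        (fun a b => R (π a) (π b))
    rw [Finset.sum_congr rfl fun i hi => Finset.sum_congr rfl fun j hj => this i hi j hj]
    rw [sum_sum_erase_const, card_Mset hst htn, Nat.cast_sub hst,
      U1_eq, double_sum_erase R hdiag π]
    ring
  -- P2 : Mset × Cset
  have hP2 : (t : ℝ) * ∑ σ ∈ Hset n t, ∑ i ∈ Mset n s t, ∑ j ∈ Cset n t,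
        R (π (σ i)) (π j)
      = ((Hset n t).card : ℝ) * (((t : ℝ) - (s : ℝ))
          * ∑ a ∈ Tset n t, ∑ b ∈ Cset n t, R (π a) (π b)) := by
    rw [sum_comm_dep, mul_sum_sum]
    have hitem : ∀ i ∈ Mset n s t, ∀ j ∈ Cset n t,
        (t : ℝ) * ∑ σ ∈ Hset n t, R (π (σ i)) (π j)
          = ((Hset n t).card : ℝ) * ∑ a ∈ Tset n t, R (π a) (π j) := by
      intro i hi j _
      exact sum_Hset_single htn (hMlt i hi) (fun a => R (π a) (π j))
    have hcomm : ∑ b ∈ Cset n t, ∑ a ∈ Tset n t, R (π a) (π b)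
        = ∑ a ∈ Tset n t, ∑ b ∈ Cset n t, R (π a) (π b) := Finset.sum_comm
    have step : ∀ i ∈ Mset n s t, (∑ j ∈ Cset n t,
        ((t : ℝ) * ∑ σ ∈ Hset n t, R (π (σ i)) (π j)))
        = ((Hset n t).card : ℝ) * ∑ a ∈ Tset n t, ∑ b ∈ Cset n t, R (π a) (π b) := by
      intro i hi
      rw [Finset.sum_congr rfl fun j hj => hitem i hi j hj, ← Finset.mul_sum, hcomm]
    rw [Finset.sum_congr rfl step, Finset.sum_const, card_Mset hst htn,
      nsmul_eq_mul, Nat.cast_sub hst]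
    ring
  -- P3 : Cset × Mset
  have hP3 : (t : ℝ) * ∑ σ ∈ Hset n t, ∑ i ∈ Cset n t, ∑ j ∈ Mset n s t,
        R (π i) (π (σ j))
      = ((Hset n t).card : ℝ) * (((t : ℝ) - (s : ℝ))
          * ∑ a ∈ Cset n t, ∑ b ∈ Tset n t, R (π a) (π b)) := by
    rw [sum_comm_dep, mul_sum_sum]
    have step : ∀ i ∈ Cset n t, ∑ j ∈ Mset n s t,
        ((t : ℝ) * ∑ σ ∈ Hset n t, R (π i) (π (σ j)))
        = ((Hset n t).card : ℝ) * (((t : ℝ) - (s : ℝ))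
            * ∑ b ∈ Tset n t, R (π i) (π b)) := by
      intro i _
      have : ∀ j ∈ Mset n s t, (t : ℝ) * ∑ σ ∈ Hset n t, R (π i) (π (σ j))
          = ((Hset n t).card : ℝ) * ∑ b ∈ Tset n t, R (π i) (π b) := by
        intro j hj
        exact sum_Hset_single htn (hMlt j hj) (fun b => R (π i) (π b))
      rw [Finset.sum_congr rfl this, Finset.sum_const, card_Mset hst htn,
        nsmul_eq_mul, Nat.cast_sub hst]
      ring
    rw [show (∑ i ∈ Cset n t, ∑ j ∈ Mset n s t,
        ((t : ℝ) * ∑ σ ∈ Hset n t, R (π i) (π (σ j))))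
      = ∑ i ∈ Cset n t, ((Hset n t).card : ℝ) * (((t : ℝ) - (s : ℝ))
          * ∑ b ∈ Tset n t, R (π i) (π b))
      from Finset.sum_congr rfl step]
    rw [← Finset.mul_sum, ← Finset.mul_sum]
  -- combine
  have expand2 : ∀ X1 X2 X3 X4 : ℝ, (t:ℝ) * ((t:ℝ)-1) * (X1 + X2 + X3 + X4)
      = (t:ℝ)*((t:ℝ)-1)*X1 + ((t:ℝ)-1)*((t:ℝ)*X2) + ((t:ℝ)-1)*((t:ℝ)*X3)
        + (t:ℝ)*((t:ℝ)-1)*X4 := fun _ _ _ _ => by ring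
  rw [expand2, hP1, hP2, hP3, hP4]
  ring

end RINGAux
namespace RINGAux

open RING

variable {n : ℕ} (R : Fin n → Fin n → ℝ)

lemma Uw_eq (π : Equiv.Perm (Fin n)) (s : ℕ) :
    Uw n R π 0 s = (((n : ℝ) - (s : ℝ) - 1) * U1 n R π 0 s
      + ((s : ℝ) - 1) * U2 n R π 0 s) / ((n : ℝ) - 2) := by
  unfold Uw
  norm_num

/-- The key averaging identity for `Uw`. -/
lemma avg_Uw (hdiag : ∀ i, R i i = 0) {s t : ℕ} (hst : s ≤ t) (htn : t ≤ n)
    (π : Equiv.Perm (Fin n)) :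
    (t : ℝ) * ((t : ℝ) - 1) * ∑ σ ∈ Hset n t, Uw n R (π * σ) 0 s
      = ((Hset n t).card : ℝ) * ( (s : ℝ) * ((s : ℝ) - 1) * Uw n R π 0 t
          + ((s : ℝ) - 1) * ((t : ℝ) - 1) * ((t : ℝ) - (s : ℝ))
            * (∑ i : Fin n, ∑ j : Fin n, R i j) / ((n : ℝ) - 2) ) := by
  have hsum : ∑ σ ∈ Hset n t, Uw n R (π * σ) 0 s
      = (((n : ℝ) - (s : ℝ) - 1) * (∑ σ ∈ Hset n t, U1 n R (π * σ) 0 s)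
        + ((s : ℝ) - 1) * (∑ σ ∈ Hset n t, U2 n R (π * σ) 0 s)) / ((n : ℝ) - 2) := by
    rw [Finset.sum_congr rfl fun σ _ => Uw_eq R (π * σ) s, ← Finset.sum_div,
      Finset.sum_add_distrib, ← Finset.mul_sum, ← Finset.mul_sum]
  have h1 := avg_U1 R hdiag hst htn π
  have h2 := avg_U2 R hdiag hst htn π
  have h3 := block_decomp R t π
  rw [hsum, Uw_eq R π t, U1_eq R π t, U2_eq R π t]
  have key : (t : ℝ) * ((t : ℝ) - 1) *
      (((n : ℝ) - (s : ℝ) - 1) * (∑ σ ∈ Hset n t, U1 n R (π * σ) 0 s)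
        + ((s : ℝ) - 1) * (∑ σ ∈ Hset n t, U2 n R (π * σ) 0 s))
      = ((Hset n t).card : ℝ) * ( (s : ℝ) * ((s : ℝ) - 1) *
          (((n : ℝ) - (t : ℝ) - 1) * (∑ i ∈ Tset n t, ∑ j ∈ Tset n t, R (π i) (π j))
            + ((t : ℝ) - 1) * (∑ i ∈ Cset n t, ∑ j ∈ Cset n t, R (π i) (π j)))
          + ((s : ℝ) - 1) * ((t : ℝ) - 1) * ((t : ℝ) - (s : ℝ))
            * (∑ i : Fin n, ∑ j : Fin n, R i j) ) := by
    rw [U1_eq R π t] at h1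
    rw [U1_eq R π t, U2_eq R π t] at h2
    linear_combination ((n : ℝ) - (s : ℝ) - 1) * h1 + ((s : ℝ) - 1) * h2
      - ((Hset n t).card : ℝ) * ((s : ℝ) - 1) * ((t : ℝ) - 1) * ((t : ℝ) - (s : ℝ)) * h3
  calc (t : ℝ) * ((t : ℝ) - 1) *
        ((((n : ℝ) - (s : ℝ) - 1) * (∑ σ ∈ Hset n t, U1 n R (π * σ) 0 s)
          + ((s : ℝ) - 1) * (∑ σ ∈ Hset n t, U2 n R (π * σ) 0 s)) / ((n : ℝ) - 2))
      = ((t : ℝ) * ((t : ℝ) - 1) *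
          (((n : ℝ) - (s : ℝ) - 1) * (∑ σ ∈ Hset n t, U1 n R (π * σ) 0 s)
            + ((s : ℝ) - 1) * (∑ σ ∈ Hset n t, U2 n R (π * σ) 0 s)))
          * ((n : ℝ) - 2)⁻¹ := by ring
    _ = (((Hset n t).card : ℝ) * ( (s : ℝ) * ((s : ℝ) - 1) *
          (((n : ℝ) - (t : ℝ) - 1) * (∑ i ∈ Tset n t, ∑ j ∈ Tset n t, R (π i) (π j))
            + ((t : ℝ) - 1) * (∑ i ∈ Cset n t, ∑ j ∈ Cset n t, R (π i) (π j)))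
          + ((s : ℝ) - 1) * ((t : ℝ) - 1) * ((t : ℝ) - (s : ℝ))
            * (∑ i : Fin n, ∑ j : Fin n, R i j) )) * ((n : ℝ) - 2)⁻¹ := by rw [key]
    _ = ((Hset n t).card : ℝ) * ( (s : ℝ) * ((s : ℝ) - 1) *
          ((((n : ℝ) - (t : ℝ) - 1) * (∑ i ∈ Tset n t, ∑ j ∈ Tset n t, R (π i) (π j))
            + ((t : ℝ) - 1) * (∑ i ∈ Cset n t, ∑ j ∈ Cset n t, R (π i) (π j))) / ((n : ℝ) - 2))
          + ((s : ℝ) - 1) * ((t : ℝ) - 1) * ((t : ℝ) - (s : ℝ))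
            * (∑ i : Fin n, ∑ j : Fin n, R i j) / ((n : ℝ) - 2) ) := by ring

end RINGAux
namespace RINGAux

open RING

variable {n : ℕ} (R : Fin n → Fin n → ℝ)

lemma factorial_cast_ne : ((n.factorial : ℝ)) ≠ 0 :=
  Nat.cast_ne_zero.2 (Nat.factorial_ne_zero n)

lemma card_perm_eq : (Finset.univ : Finset (Equiv.Perm (Fin n))).card = n.factorial := by
  rw [Finset.card_univ, Fintype.card_perm, Fintype.card_fin]

lemma sum_center_zero (g : Equiv.Perm (Fin n) → ℝ) :
    ∑ π : Equiv.Perm (Fin n), (g π - pexp n g) = 0 := by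
  rw [Finset.sum_sub_distrib, Finset.sum_const, card_perm_eq, nsmul_eq_mul]
  unfold pexp
  rw [mul_div_cancel₀ _ (factorial_cast_ne (n := n))]
  ring

lemma pcov_eq_sum (f g : Equiv.Perm (Fin n) → ℝ) :
    pcov n f g = (∑ π : Equiv.Perm (Fin n), f π * (g π - pexp n g))
      / (n.factorial : ℝ) := by
  have h0 : pcov n f g = (∑ π : Equiv.Perm (Fin n),
      (f π - pexp n f) * (g π - pexp n g)) / (n.factorial : ℝ) := rfl
  rw [h0]
  congr 1
  have : ∀ π : Equiv.Perm (Fin n), (f π - pexp n f) * (g π - pexp n g)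
      = f π * (g π - pexp n g) - pexp n f * (g π - pexp n g) := fun π => by ring
  rw [Finset.sum_congr rfl fun π _ => this π, Finset.sum_sub_distrib,
    ← Finset.mul_sum, sum_center_zero, mul_zero, sub_zero]

lemma pvar_eq_pcov (g : Equiv.Perm (Fin n) → ℝ) : pvar n g = pcov n g g := by
  unfold pvar pcov
  congr 1
  funext π
  ring

lemma pvar_eq_sum (g : Equiv.Perm (Fin n) → ℝ) :
    pvar n g = (∑ π : Equiv.Perm (Fin n), g π * (g π - pexp n g))
      / (n.factorial : ℝ) := by
  rw [pvar_eq_pcov, pcov_eq_sum]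

lemma pcov_comm (f g : Equiv.Perm (Fin n) → ℝ) : pcov n f g = pcov n g f := by
  unfold pcov
  congr 1
  funext π
  ring

/-- Right-invariance of `Uw` at time `t` under `Hset n t`. -/
lemma Uw_right_inv {t : ℕ} {σ : Equiv.Perm (Fin n)} (hσ : σ ∈ Hset n t)
    (π : Equiv.Perm (Fin n)) : Uw n R (π * σ) 0 t = Uw n R π 0 t := by
  have hU1 : U1 n R (π * σ) 0 t = U1 n R π 0 t := by
    rw [U1_eq, U1_eq]
    have inner : ∀ a : Fin n, ∑ j ∈ Tset n t, R (π a) (π (σ j))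
        = ∑ j ∈ Tset n t, R (π a) (π j) := fun a =>
      sum_Tset_inv hσ (fun b => R (π a) (π b))
    calc ∑ i ∈ Tset n t, ∑ j ∈ Tset n t, R ((π * σ) i) ((π * σ) j)
        = ∑ i ∈ Tset n t, ∑ j ∈ Tset n t, R (π (σ i)) (π j) :=
          Finset.sum_congr rfl fun i _ => inner (σ i)
      _ = ∑ i ∈ Tset n t, ∑ j ∈ Tset n t, R (π i) (π j) :=
          sum_Tset_inv hσ (fun a => ∑ j ∈ Tset n t, R (π a) (π j))
  have hU2 : U2 n R (π * σ) 0 t = U2 n R π 0 t := by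
    rw [U2_eq, U2_eq]
    refine Finset.sum_congr rfl fun i hi => Finset.sum_congr rfl fun j hj => ?_
    show R (π (σ i)) (π (σ j)) = R (π i) (π j)
    rw [mem_Hset.1 hσ i (mem_Cset.1 hi), mem_Hset.1 hσ j (mem_Cset.1 hj)]
  rw [Uw_eq, Uw_eq, hU1, hU2]

/-- The exact covariance identity: for `s ≤ t ≤ n`,
`t(t-1)·Cov(U_w(s), U_w(t)) = s(s-1)·Var(U_w(t))`. -/
theorem cov_id (hdiag : ∀ i, R i i = 0) {s t : ℕ} (hst : s ≤ t) (htn : t ≤ n) :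
    (t : ℝ) * ((t : ℝ) - 1) * pcov n (fun π => Uw n R π 0 s) (fun π => Uw n R π 0 t)
      = (s : ℝ) * ((s : ℝ) - 1) * pvar n (fun π => Uw n R π 0 t) := by
  set g : Equiv.Perm (Fin n) → ℝ := fun π => Uw n R π 0 t with hg
  set F : Equiv.Perm (Fin n) → ℝ := fun π => g π - pexp n g with hF
  have hFinv : ∀ (σ : Equiv.Perm (Fin n)), σ ∈ Hset n t → ∀ π, F (π * σ) = F π := by
    intro σ hσ π
    simp only [hF, hg, Uw_right_inv R hσ π]
  have hcard : ((Hset n t).card : ℝ) ≠ 0 := by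
    have : (1 : Equiv.Perm (Fin n)) ∈ Hset n t := one_mem_Hset t
    exact Nat.cast_ne_zero.2 (Finset.card_ne_zero_of_mem this)
  set S1 : ℝ := ∑ π : Equiv.Perm (Fin n), Uw n R π 0 s * F π with hS1
  set S2 : ℝ := ∑ π : Equiv.Perm (Fin n), g π * F π with hS2
  have stepA : ((Hset n t).card : ℝ) * S1
      = ∑ σ ∈ Hset n t, ∑ π : Equiv.Perm (Fin n), Uw n R (π * σ) 0 s * F (π * σ) := by
    have : ∀ σ ∈ Hset n t,
        (∑ π : Equiv.Perm (Fin n), Uw n R (π * σ) 0 s * F (π * σ)) = S1 := by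
      intro σ _
      exact Equiv.sum_comp (Equiv.mulRight σ) (fun π => Uw n R π 0 s * F π)
    rw [Finset.sum_congr rfl this, Finset.sum_const, nsmul_eq_mul]
  have stepB : ∑ σ ∈ Hset n t, ∑ π : Equiv.Perm (Fin n), Uw n R (π * σ) 0 s * F (π * σ)
      = ∑ π : Equiv.Perm (Fin n), F π * ∑ σ ∈ Hset n t, Uw n R (π * σ) 0 s := by
    rw [Finset.sum_comm]
    refine Finset.sum_congr rfl fun π _ => ?_
    rw [Finset.mul_sum]
    refine Finset.sum_congr rfl fun σ hσ => ?_
    rw [hFinv σ hσ π]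
    ring
  have hzF : ∑ π : Equiv.Perm (Fin n), F π = 0 := sum_center_zero g
  set c0 : ℝ := ((s : ℝ) - 1) * ((t : ℝ) - 1) * ((t : ℝ) - (s : ℝ))
      * (∑ i : Fin n, ∑ j : Fin n, R i j) / ((n : ℝ) - 2) with hc0
  have havg : ∀ π : Equiv.Perm (Fin n),
      (t : ℝ) * ((t : ℝ) - 1) * ∑ σ ∈ Hset n t, Uw n R (π * σ) 0 s
        = ((Hset n t).card : ℝ) * ((s : ℝ) * ((s : ℝ) - 1) * g π + c0) := by
    intro π
    rw [avg_Uw R hdiag hst htn π]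
  have stepC : (t : ℝ) * ((t : ℝ) - 1) * (((Hset n t).card : ℝ) * S1)
      = ((Hset n t).card : ℝ) * ((s : ℝ) * ((s : ℝ) - 1) * S2) := by
    rw [stepA, stepB]
    calc (t : ℝ) * ((t : ℝ) - 1) *
          ∑ π : Equiv.Perm (Fin n), F π * ∑ σ ∈ Hset n t, Uw n R (π * σ) 0 s
        = ∑ π : Equiv.Perm (Fin n), F π *
            ((t : ℝ) * ((t : ℝ) - 1) * ∑ σ ∈ Hset n t, Uw n R (π * σ) 0 s) := by
          rw [Finset.mul_sum]; exact Finset.sum_congr rfl fun π _ => by ring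
      _ = ∑ π : Equiv.Perm (Fin n), F π * (((Hset n t).card : ℝ)
            * ((s : ℝ) * ((s : ℝ) - 1) * g π + c0)) :=
          Finset.sum_congr rfl fun π _ => by rw [havg π]
      _ = ∑ π : Equiv.Perm (Fin n), (((Hset n t).card : ℝ) * ((s : ℝ) * ((s : ℝ) - 1))
            * (g π * F π) + (((Hset n t).card : ℝ) * c0) * F π) :=
          Finset.sum_congr rfl fun π _ => by ring
      _ = ((Hset n t).card : ℝ) * ((s : ℝ) * ((s : ℝ) - 1))
            * (∑ π : Equiv.Perm (Fin n), g π * F π)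
          + (((Hset n t).card : ℝ) * c0) * ∑ π : Equiv.Perm (Fin n), F π := by
          rw [Finset.sum_add_distrib, ← Finset.mul_sum, ← Finset.mul_sum]
      _ = ((Hset n t).card : ℝ) * ((s : ℝ) * ((s : ℝ) - 1) * S2) := by
          rw [hzF, ← hS2]; ring
  have key : (t : ℝ) * ((t : ℝ) - 1) * S1 = (s : ℝ) * ((s : ℝ) - 1) * S2 := by
    have h' : ((Hset n t).card : ℝ) * ((t : ℝ) * ((t : ℝ) - 1) * S1)
        = ((Hset n t).card : ℝ) * ((s : ℝ) * ((s : ℝ) - 1) * S2) := by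
      linear_combination stepC
    exact mul_left_cancel₀ hcard h' 
  have hpcov : pcov n (fun π => Uw n R π 0 s) g = S1 / (n.factorial : ℝ) := by
    rw [pcov_eq_sum]
  have hpvar : pvar n g = S2 / (n.factorial : ℝ) := by
    rw [pvar_eq_sum]
  rw [hpcov, hpvar]
  calc (t : ℝ) * ((t : ℝ) - 1) * (S1 / (n.factorial : ℝ))
      = ((t : ℝ) * ((t : ℝ) - 1) * S1) / (n.factorial : ℝ) := by ring
    _ = ((s : ℝ) * ((s : ℝ) - 1) * S2) / (n.factorial : ℝ) := by rw [key]
    _ = (s : ℝ) * ((s : ℝ) - 1) * (S2 / (n.factorial : ℝ)) := by ring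

end RINGAux
namespace RINGAux

open RING

variable {n : ℕ} (R : Fin n → Fin n → ℝ)

lemma U1_rev (π : Equiv.Perm (Fin n)) {t : ℕ} (htn : t ≤ n) :
    U1 n R (π * Fin.revPerm) 0 t = U2 n R π 0 (n - t) := by
  rw [U1_eq, U2_eq]
  have hmem : ∀ i : Fin n, i ∈ Tset n t ↔ Fin.revPerm i ∈ Cset n (n - t) := by
    intro i
    simp only [mem_Tset, mem_Cset, Fin.revPerm_apply, Fin.val_rev]
    have := i.isLt
    omega
  refine Finset.sum_equiv (Fin.revPerm) (fun i => hmem i) (fun i _ => ?_)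
  refine Finset.sum_equiv (Fin.revPerm) (fun j => hmem j) (fun j _ => ?_)
  rfl

lemma U2_rev (π : Equiv.Perm (Fin n)) {t : ℕ} (htn : t ≤ n) :
    U2 n R (π * Fin.revPerm) 0 t = U1 n R π 0 (n - t) := by
  rw [U2_eq, U1_eq]
  have hmem : ∀ i : Fin n, i ∈ Cset n t ↔ Fin.revPerm i ∈ Tset n (n - t) := by
    intro i
    simp only [mem_Tset, mem_Cset, Fin.revPerm_apply, Fin.val_rev]
    have := i.isLt
    omega
  refine Finset.sum_equiv (Fin.revPerm) (fun i => hmem i) (fun i _ => ?_)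
  refine Finset.sum_equiv (Fin.revPerm) (fun j => hmem j) (fun j _ => ?_)
  rfl

lemma Uw_rev (π : Equiv.Perm (Fin n)) {t : ℕ} (htn : t ≤ n) :
    Uw n R (π * Fin.revPerm) 0 t = Uw n R π 0 (n - t) := by
  rw [Uw_eq, Uw_eq, U1_rev R π htn, U2_rev R π htn, Nat.cast_sub htn]
  ring

lemma pexp_comp_rev (f : Equiv.Perm (Fin n) → ℝ) :
    pexp n (fun π => f (π * Fin.revPerm)) = pexp n f := by
  unfold pexp
  congr 1
  exact Equiv.sum_comp (Equiv.mulRight (Fin.revPerm)) f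

lemma pcov_comp_rev (f g : Equiv.Perm (Fin n) → ℝ) :
    pcov n (fun π => f (π * Fin.revPerm)) (fun π => g (π * Fin.revPerm))
      = pcov n f g := by
  unfold pcov
  rw [pexp_comp_rev f, pexp_comp_rev g]
  exact pexp_comp_rev (fun π => (f π - pexp n f) * (g π - pexp n g))

lemma pcov_Uw_rev (s t : ℕ) (hsn : s ≤ n) (htn : t ≤ n) :
    pcov n (fun π => Uw n R π 0 s) (fun π => Uw n R π 0 t)
      = pcov n (fun π => Uw n R π 0 (n - s)) (fun π => Uw n R π 0 (n - t)) := by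
  rw [← pcov_comp_rev (fun π => Uw n R π 0 s) (fun π => Uw n R π 0 t)]
  congr 1
  · funext π; exact Uw_rev R π hsn
  · funext π; exact Uw_rev R π htn

lemma pvar_Uw_rev (t : ℕ) (htn : t ≤ n) :
    pvar n (fun π => Uw n R π 0 t) = pvar n (fun π => Uw n R π 0 (n - t)) := by
  rw [pvar_eq_pcov, pvar_eq_pcov]
  exact pcov_Uw_rev R t t htn htn

end RINGAux
namespace RINGAux

open RING

variable {n : ℕ} (R : Fin n → Fin n → ℝ)

lemma pexp_smul (a : ℝ) (f : Equiv.Perm (Fin n) → ℝ) :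
    pexp n (fun π => a * f π) = a * pexp n f := by
  unfold pexp
  rw [← Finset.mul_sum, mul_div_assoc]

lemma pexp_affine (a c : ℝ) (f : Equiv.Perm (Fin n) → ℝ) :
    pexp n (fun π => a * f π + c) = a * pexp n f + c := by
  unfold pexp
  rw [Finset.sum_add_distrib, ← Finset.mul_sum, Finset.sum_const, card_perm_eq,
    nsmul_eq_mul, add_div, mul_div_assoc, mul_div_cancel_left₀ _ (factorial_cast_ne (n := n))]

lemma pcov_affine (a b c d : ℝ) (f g : Equiv.Perm (Fin n) → ℝ) :
    pcov n (fun π => a * f π + c) (fun π => b * g π + d) = a * b * pcov n f g := by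
  unfold pcov
  rw [pexp_affine a c f, pexp_affine b d g]
  have h1 : (fun π => (a * f π + c - (a * pexp n f + c))
      * (b * g π + d - (b * pexp n g + d)))
      = fun π => (a * b) * ((f π - pexp n f) * (g π - pexp n g)) :=
    funext fun π => by ring
  rw [h1, pexp_smul]

/-- Exact formula for the covariance of the standardized statistics. -/
theorem pcov_Zw_eq (hdiag : ∀ i, R i i = 0) {s t : ℕ} (hs : 2 ≤ s) (hst : s ≤ t)
    (htn : t + 2 ≤ n)
    (hVs : 0 < pvar n (fun π => Uw n R π 0 s))
    (hVt : 0 < pvar n (fun π => Uw n R π 0 t)) :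
    pcov n (fun π => Zw n R π 0 s) (fun π => Zw n R π 0 t)
      = Real.sqrt ( ((s : ℝ) * ((s : ℝ) - 1) * ((n : ℝ) - (t : ℝ))
          * ((n : ℝ) - (t : ℝ) - 1))
        / ((t : ℝ) * ((t : ℝ) - 1) * ((n : ℝ) - (s : ℝ))
          * ((n : ℝ) - (s : ℝ) - 1)) ) := by
  set Vs : ℝ := pvar n (fun π => Uw n R π 0 s) with hVsdef
  set Vt : ℝ := pvar n (fun π => Uw n R π 0 t) with hVtdef
  set Cov : ℝ := pcov n (fun π => Uw n R π 0 s) (fun π => Uw n R π 0 t) with hCovdef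
  have hsn : s ≤ n := by omega
  have htn' : t ≤ n := by omega
  have hsR : (2 : ℝ) ≤ (s : ℝ) := by exact_mod_cast hs
  have htR : (2 : ℝ) ≤ (t : ℝ) := le_trans hsR (by exact_mod_cast hst)
  have hnt : (t : ℝ) + 2 ≤ (n : ℝ) := by exact_mod_cast htn
  have hns : (s : ℝ) + 2 ≤ (n : ℝ) := by
    have : (s : ℝ) ≤ (t : ℝ) := by exact_mod_cast hst
    linarith
  -- identity I1
  have I1 : (t : ℝ) * ((t : ℝ) - 1) * Cov = (s : ℝ) * ((s : ℝ) - 1) * Vt :=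
    cov_id R hdiag hst htn'
  -- identity I2 via reversal
  have I2 : ((n : ℝ) - (s : ℝ)) * ((n : ℝ) - (s : ℝ) - 1) * Cov
      = ((n : ℝ) - (t : ℝ)) * ((n : ℝ) - (t : ℝ) - 1) * Vs := by
    have h1 := cov_id R hdiag (show n - t ≤ n - s by omega) (show n - s ≤ n from Nat.sub_le n s)
    have h2 : pcov n (fun π => Uw n R π 0 (n - t)) (fun π => Uw n R π 0 (n - s))
        = Cov := by
      rw [hCovdef, pcov_Uw_rev R s t hsn htn', pcov_comm]
    have h3 : pvar n (fun π => Uw n R π 0 (n - s)) = Vs := by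
      rw [hVsdef, pvar_Uw_rev R s hsn]
    rw [h2, h3] at h1
    have c1 : ((n - s : ℕ) : ℝ) = (n : ℝ) - (s : ℝ) := by
      rw [Nat.cast_sub hsn]
    have c2 : ((n - t : ℕ) : ℝ) = (n : ℝ) - (t : ℝ) := by
      rw [Nat.cast_sub htn']
    rw [c1, c2] at h1
    exact h1
  -- positivity
  have hd1 : (0 : ℝ) < (t : ℝ) * ((t : ℝ) - 1) := by nlinarith
  have hd2 : (0 : ℝ) < ((n : ℝ) - (s : ℝ)) * ((n : ℝ) - (s : ℝ) - 1) := by nlinarith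
  have ha : (0 : ℝ) < (s : ℝ) * ((s : ℝ) - 1) := by nlinarith
  have hc : (0 : ℝ) < ((n : ℝ) - (t : ℝ)) * ((n : ℝ) - (t : ℝ) - 1) := by nlinarith
  have hCovpos : 0 ≤ Cov := by nlinarith
  -- express pcov of the Z's
  have hZcov : pcov n (fun π => Zw n R π 0 s) (fun π => Zw n R π 0 t)
      = (Real.sqrt Vs)⁻¹ * (Real.sqrt Vt)⁻¹ * Cov := by
    have hZs : (fun π => Zw n R π 0 s)
        = fun π => (Real.sqrt Vs)⁻¹ * Uw n R π 0 s
          + (-(pexp n (fun σ => Uw n R σ 0 s)) * (Real.sqrt Vs)⁻¹) := by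
      funext π
      show (Uw n R π 0 s - pexp n (fun σ => Uw n R σ 0 s)) / Real.sqrt Vs = _
      rw [div_eq_mul_inv]
      ring
    have hZt : (fun π => Zw n R π 0 t)
        = fun π => (Real.sqrt Vt)⁻¹ * Uw n R π 0 t
          + (-(pexp n (fun σ => Uw n R σ 0 t)) * (Real.sqrt Vt)⁻¹) := by
      funext π
      show (Uw n R π 0 t - pexp n (fun σ => Uw n R σ 0 t)) / Real.sqrt Vt = _
      rw [div_eq_mul_inv]
      ring
    rw [hZs, hZt, pcov_affine]
  set X : ℝ := (Real.sqrt Vs)⁻¹ * (Real.sqrt Vt)⁻¹ * Cov with hXdef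
  have hX0 : 0 ≤ X := by
    apply mul_nonneg (mul_nonneg (inv_nonneg.2 (Real.sqrt_nonneg _))
      (inv_nonneg.2 (Real.sqrt_nonneg _))) hCovpos
  have hprod : Cov * Cov * (((t : ℝ) * ((t : ℝ) - 1))
      * (((n : ℝ) - (s : ℝ)) * ((n : ℝ) - (s : ℝ) - 1)))
      = ((s : ℝ) * ((s : ℝ) - 1)) * (((n : ℝ) - (t : ℝ)) * ((n : ℝ) - (t : ℝ) - 1))
        * (Vs * Vt) := by
    linear_combination (((n : ℝ) - (s : ℝ)) * ((n : ℝ) - (s : ℝ) - 1) * Cov) * I1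
      + ((s : ℝ) * ((s : ℝ) - 1) * Vt) * I2
  have hX2 : X ^ 2 = ((s : ℝ) * ((s : ℝ) - 1) * ((n : ℝ) - (t : ℝ))
        * ((n : ℝ) - (t : ℝ) - 1))
      / ((t : ℝ) * ((t : ℝ) - 1) * ((n : ℝ) - (s : ℝ)) * ((n : ℝ) - (s : ℝ) - 1)) := by
    have e1 : (Real.sqrt Vs)⁻¹ ^ 2 = Vs⁻¹ := by rw [inv_pow, Real.sq_sqrt hVs.le]
    have e2 : (Real.sqrt Vt)⁻¹ ^ 2 = Vt⁻¹ := by rw [inv_pow, Real.sq_sqrt hVt.le]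
    have hsq : X ^ 2 = (Cov * Cov) / (Vs * Vt) := by
      rw [hXdef, mul_pow, mul_pow, e1, e2]
      rw [div_eq_mul_inv, mul_inv]
      ring
    have hden : ((t : ℝ) * ((t : ℝ) - 1) * ((n : ℝ) - (s : ℝ)) * ((n : ℝ) - (s : ℝ) - 1)) ≠ 0 := by
      have hpos : (0 : ℝ) < (t : ℝ) * ((t : ℝ) - 1) * ((n : ℝ) - (s : ℝ)) * ((n : ℝ) - (s : ℝ) - 1) := by
        have h12 := mul_pos hd1 hd2
        calc (0:ℝ) < ((t : ℝ) * ((t : ℝ) - 1)) * (((n : ℝ) - (s : ℝ)) * ((n : ℝ) - (s : ℝ) - 1)) := h12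
          _ = (t : ℝ) * ((t : ℝ) - 1) * ((n : ℝ) - (s : ℝ)) * ((n : ℝ) - (s : ℝ) - 1) := by ring
      exact ne_of_gt hpos
    rw [hsq, div_eq_div_iff (ne_of_gt (mul_pos hVs hVt)) hden]
    linear_combination hprod
  rw [hZcov, ← hX2, Real.sqrt_sq hX0]

end RINGAux
namespace RINGAux

open RING Filter Topology

lemma floor_div_tendsto {u : ℝ} (hu : 0 < u) :
    Tendsto (fun n : ℕ => ((⌊(n : ℝ) * u⌋₊ : ℕ) : ℝ) / (n : ℝ)) atTop (𝓝 u) := by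
  have h := (tendsto_nat_floor_mul_div_atTop (le_of_lt hu)).comp
    (tendsto_natCast_atTop_atTop (R := ℝ))
  refine h.congr fun n => ?_
  simp only [Function.comp_apply, mul_comm]

lemma one_div_nat_tendsto : Tendsto (fun n : ℕ => 1 / (n : ℝ)) atTop (𝓝 0) :=
  tendsto_one_div_atTop_nhds_zero_nat

/-- Main asymptotic lemma for `u ≤ v`. -/
lemma main_tendsto (R : (n : ℕ) → Fin n → Fin n → ℝ)
    (hdiag : ∀ n (i : Fin n), R n i i = 0)
    {u v : ℝ} (hu : u ∈ Set.Ioo (0 : ℝ) 1) (hv : v ∈ Set.Ioo (0 : ℝ) 1) (huv : u ≤ v)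
    (hvar : ∀ᶠ n in atTop,
      0 < pvar n (fun π => Uw n (R n) π 0 ⌊(n : ℝ) * u⌋₊)
        ∧ 0 < pvar n (fun π => Uw n (R n) π 0 ⌊(n : ℝ) * v⌋₊)) :
    Tendsto (fun n =>
        pcov n (fun π => Zw n (R n) π 0 ⌊(n : ℝ) * u⌋₊)
          (fun π => Zw n (R n) π 0 ⌊(n : ℝ) * v⌋₊))
      atTop (𝓝 (u * (1 - v) / (v * (1 - u)))) := by
  obtain ⟨hu0, hu1⟩ := hu
  obtain ⟨hv0, hv1⟩ := hv
  set s : ℕ → ℕ := fun n => ⌊(n : ℝ) * u⌋₊ with hsdef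
  set t : ℕ → ℕ := fun n => ⌊(n : ℝ) * v⌋₊ with htdef
  -- the sequence of exact values
  set G : ℕ → ℝ := fun n =>
    ((s n : ℝ) * ((s n : ℝ) - 1) * ((n : ℝ) - (t n : ℝ)) * ((n : ℝ) - (t n : ℝ) - 1))
      / ((t n : ℝ) * ((t n : ℝ) - 1) * ((n : ℝ) - (s n : ℝ))
        * ((n : ℝ) - (s n : ℝ) - 1)) with hGdef
  -- eventual equality
  have hsTop : Tendsto s atTop atTop :=
    tendsto_nat_floor_atTop.comp
      (Tendsto.atTop_mul_const hu0 (tendsto_natCast_atTop_atTop (R := ℝ)))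
  have hE1 : ∀ᶠ n in atTop, 2 ≤ s n := hsTop.eventually_ge_atTop 2
  have hntm : Tendsto (fun n : ℕ => (n : ℝ) * (1 - v)) atTop atTop :=
    Tendsto.atTop_mul_const (by linarith) (tendsto_natCast_atTop_atTop (R := ℝ))
  have hE2 : ∀ᶠ n in atTop, t n + 2 ≤ n := by
    filter_upwards [hntm.eventually_ge_atTop 2] with n hn
    have h1 : (t n : ℝ) ≤ (n : ℝ) * v := Nat.floor_le (by positivity)
    have h2 : (t n : ℝ) + 2 ≤ (n : ℝ) := by nlinarith
    exact_mod_cast h2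
  have hE3 : ∀ n : ℕ, s n ≤ t n := fun n =>
    Nat.floor_mono (by nlinarith [Nat.cast_nonneg (α := ℝ) n])
  have heq : ∀ᶠ n in atTop,
      pcov n (fun π => Zw n (R n) π 0 (s n)) (fun π => Zw n (R n) π 0 (t n))
        = Real.sqrt (G n) := by
    filter_upwards [hE1, hE2, hvar] with n h1 h2 h3
    exact pcov_Zw_eq (R n) (hdiag n) h1 (hE3 n) h2 h3.1 h3.2
  -- limit of G
  have hs1 : Tendsto (fun n : ℕ => (s n : ℝ) / (n : ℝ)) atTop (𝓝 u) :=
    floor_div_tendsto hu0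
  have ht1 : Tendsto (fun n : ℕ => (t n : ℝ) / (n : ℝ)) atTop (𝓝 v) :=
    floor_div_tendsto hv0
  have hs2 : Tendsto (fun n : ℕ => ((s n : ℝ) - 1) / (n : ℝ)) atTop (𝓝 u) := by
    have := hs1.sub one_div_nat_tendsto
    rw [sub_zero] at this
    refine this.congr fun n => ?_
    rw [← sub_div]
  have ht2 : Tendsto (fun n : ℕ => ((t n : ℝ) - 1) / (n : ℝ)) atTop (𝓝 v) := by
    have := ht1.sub one_div_nat_tendsto
    rw [sub_zero] at this
    refine this.congr fun n => ?_
    rw [← sub_div]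
  have ht3 : Tendsto (fun n : ℕ => ((n : ℝ) - (t n : ℝ)) / (n : ℝ)) atTop (𝓝 (1 - v)) := by
    have hlim : Tendsto (fun n : ℕ => (n : ℝ) / (n : ℝ) - (t n : ℝ) / (n : ℝ)) atTop
        (𝓝 (1 - v)) := by
      have hone : Tendsto (fun n : ℕ => (n : ℝ) / (n : ℝ)) atTop (𝓝 1) := by
        refine tendsto_const_nhds.congr' ?_
        filter_upwards [eventually_ge_atTop 1] with n hn
        rw [div_self (by exact_mod_cast Nat.one_le_iff_ne_zero.1 hn : (n : ℝ) ≠ 0)]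
      exact hone.sub ht1
    refine hlim.congr fun n => ?_
    rw [← sub_div]
  have ht4 : Tendsto (fun n : ℕ => ((n : ℝ) - (t n : ℝ) - 1) / (n : ℝ)) atTop
      (𝓝 (1 - v)) := by
    have := ht3.sub one_div_nat_tendsto
    rw [sub_zero] at this
    refine this.congr fun n => ?_
    rw [← sub_div]
  have hs3 : Tendsto (fun n : ℕ => ((n : ℝ) - (s n : ℝ)) / (n : ℝ)) atTop (𝓝 (1 - u)) := by
    have hlim : Tendsto (fun n : ℕ => (n : ℝ) / (n : ℝ) - (s n : ℝ) / (n : ℝ)) atTop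
        (𝓝 (1 - u)) := by
      have hone : Tendsto (fun n : ℕ => (n : ℝ) / (n : ℝ)) atTop (𝓝 1) := by
        refine tendsto_const_nhds.congr' ?_
        filter_upwards [eventually_ge_atTop 1] with n hn
        rw [div_self (by exact_mod_cast Nat.one_le_iff_ne_zero.1 hn : (n : ℝ) ≠ 0)]
      exact hone.sub hs1
    refine hlim.congr fun n => ?_
    rw [← sub_div]
  have hs4 : Tendsto (fun n : ℕ => ((n : ℝ) - (s n : ℝ) - 1) / (n : ℝ)) atTop
      (𝓝 (1 - u)) := by
    have := hs3.sub one_div_nat_tendsto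
    rw [sub_zero] at this
    refine this.congr fun n => ?_
    rw [← sub_div]
  have hP : Tendsto (fun n : ℕ => ((s n : ℝ) / n) * (((s n : ℝ) - 1) / n)
      * (((n : ℝ) - (t n : ℝ)) / n) * (((n : ℝ) - (t n : ℝ) - 1) / n)) atTop
      (𝓝 (u * u * (1 - v) * (1 - v))) :=
    ((hs1.mul hs2).mul ht3).mul ht4
  have hQ : Tendsto (fun n : ℕ => ((t n : ℝ) / n) * (((t n : ℝ) - 1) / n)
      * (((n : ℝ) - (s n : ℝ)) / n) * (((n : ℝ) - (s n : ℝ) - 1) / n)) atTop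
      (𝓝 (v * v * (1 - u) * (1 - u))) :=
    ((ht1.mul ht2).mul hs3).mul hs4
  have h1u : (0:ℝ) < 1 - u := by linarith
  have h1v : (0:ℝ) < 1 - v := by linarith
  have hQne : v * v * (1 - u) * (1 - u) ≠ 0 :=
    ne_of_gt (mul_pos (mul_pos (mul_pos hv0 hv0) h1u) h1u)
  have hG : Tendsto G atTop (𝓝 ((u * u * (1 - v) * (1 - v))
      / (v * v * (1 - u) * (1 - u)))) := by
    refine (hP.div hQ hQne).congr fun n => ?_
    simp only [Pi.div_apply]
    rcases eq_or_ne ((n : ℝ)) 0 with h0 | h0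
    · have hn0 : n = 0 := by exact_mod_cast h0
      subst hn0
      simp [hGdef, hsdef, htdef]
    · have : ((s n : ℝ) / n) * (((s n : ℝ) - 1) / n) * (((n : ℝ) - (t n : ℝ)) / n)
          * (((n : ℝ) - (t n : ℝ) - 1) / n)
          = ((s n : ℝ) * ((s n : ℝ) - 1) * ((n : ℝ) - (t n : ℝ))
            * ((n : ℝ) - (t n : ℝ) - 1)) * ((n : ℝ)⁻¹) ^ 4 := by ring
      have h2 : ((t n : ℝ) / n) * (((t n : ℝ) - 1) / n) * (((n : ℝ) - (s n : ℝ)) / n)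
          * (((n : ℝ) - (s n : ℝ) - 1) / n)
          = ((t n : ℝ) * ((t n : ℝ) - 1) * ((n : ℝ) - (s n : ℝ))
            * ((n : ℝ) - (s n : ℝ) - 1)) * ((n : ℝ)⁻¹) ^ 4 := by ring
      rw [this, h2, mul_div_mul_right _ _ (by positivity : ((n : ℝ)⁻¹) ^ 4 ≠ 0)]
  have hlimit : Tendsto (fun n => Real.sqrt (G n)) atTop
      (𝓝 (u * (1 - v) / (v * (1 - u)))) := by
    have h := hG.sqrt
    have : Real.sqrt ((u * u * (1 - v) * (1 - v)) / (v * v * (1 - u) * (1 - u)))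
        = u * (1 - v) / (v * (1 - u)) := by
      have harg : (u * u * (1 - v) * (1 - v)) / (v * v * (1 - u) * (1 - u))
          = (u * (1 - v) / (v * (1 - u))) ^ 2 := by
        rw [div_pow]
        congr 1 <;> ring
      have hr0 : 0 ≤ u * (1 - v) / (v * (1 - u)) :=
        div_nonneg (mul_nonneg hu0.le h1v.le) (le_of_lt (mul_pos hv0 h1u))
      rw [harg, Real.sqrt_sq hr0]
    rw [this] at h
    exact h
  exact Tendsto.congr' (heq.mono fun n hn => hn.symm) hlimit

end RINGAux

/-- Under Conditions (C1)–(C6), for all fixed `u, v ∈ (0,1)`, the covariance of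
`Z_w^π(⌊n·u⌋)` and `Z_w^π(⌊n·v⌋)` under the permutation null converges to
`ρ_w*(u,v) = (u∧v)(1−(u∨v))/((u∨v)(1−(u∧v)))`. -/
theorem stmt13 (R : (n : ℕ) → Fin n → Fin n → ℝ)
    (hsym : ∀ n (i j : Fin n), R n i j = R n j i) (hdiag : ∀ n (i : Fin n), R n i i = 0)
    (hC1 : Cond1 R) (hC2 : Cond2 R) (hC3 : Cond3 R) (hC4 : Cond4 R)
    (hC5 : Cond5 R) (hC6 : Cond6 R)
    (u v : ℝ) (hu : u ∈ Set.Ioo (0 : ℝ) 1) (hv : v ∈ Set.Ioo (0 : ℝ) 1)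
    (hvar : ∀ᶠ n in atTop,
      (0 < pvar n (fun π => Uw n (R n) π 0 ⌊(n : ℝ) * u⌋₊)
        ∧ 0 < pvar n (fun π => Udiff n (R n) π 0 ⌊(n : ℝ) * u⌋₊))
      ∧ (0 < pvar n (fun π => Uw n (R n) π 0 ⌊(n : ℝ) * v⌋₊)
        ∧ 0 < pvar n (fun π => Udiff n (R n) π 0 ⌊(n : ℝ) * v⌋₊))) :
    Tendsto
      (fun n =>
        pcov n (fun π => Zw n (R n) π 0 ⌊(n : ℝ) * u⌋₊)
          (fun π => Zw n (R n) π 0 ⌊(n : ℝ) * v⌋₊))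
      atTop (𝓝 (rhoW u v)) := by
  rcases le_total u v with huv | hvu
  · have h := RINGAux.main_tendsto R hdiag hu hv huv
      (hvar.mono fun n hn => ⟨hn.1.1, hn.2.1⟩)
    have hrho : rhoW u v = u * (1 - v) / (v * (1 - u)) := by
      unfold rhoW
      rw [min_eq_left huv, max_eq_right huv]
    rw [hrho]
    exact h
  · have h := RINGAux.main_tendsto R hdiag hv hu hvu
      (hvar.mono fun n hn => ⟨hn.2.1, hn.1.1⟩)
    have hsymm : (fun n => pcov n (fun π => Zw n (R n) π 0 ⌊(n : ℝ) * u⌋₊)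
          (fun π => Zw n (R n) π 0 ⌊(n : ℝ) * v⌋₊))
        = fun n => pcov n (fun π => Zw n (R n) π 0 ⌊(n : ℝ) * v⌋₊)
          (fun π => Zw n (R n) π 0 ⌊(n : ℝ) * u⌋₊) :=
      funext fun n => RINGAux.pcov_comm _ _
    have hrho : rhoW u v = v * (1 - u) / (u * (1 - v)) := by
      unfold rhoW
      rw [min_eq_right hvu, max_eq_left hvu]
    rw [hsymm, hrho]
    exact h
end

section
/- Under Conditions (C1)–(C6), for all fixed u, v ∈ (0,1), the covariance under the permutation null distribution of Z_diff^π(⌊n·u⌋) and Z_diff^π(⌊n·v⌋) converges, as n → ∞, to ρ_diff*(u,v) = (u∧v)(1−(u∨v))/√((u∧v)(1−(u∧v))·(u∨v)(1−(u∨v))). -/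
open Finset Filter Asymptotics MeasureTheory ProbabilityTheory Topology

open RING

/-!
By symmetry of `R`, `U_diff^π(0,t) = 2 ∑_{i ≤ t} R_{π(i)·} - ∑_{i,j} R_{ij}` is a linear statistic
of a sample drawn without replacement from the row sums. Its covariances are therefore exact:
`Cov(U_diff(0,s), U_diff(0,t)) = s (n - t) κ_n` for `s ≤ t`, the covariance of a Brownian bridge.
After standardization the scale `κ_n` cancels, so the covariance of `Z_diff(s)` and `Z_diff(t)` is
exactly `ρ_diff*(s/n, t/n)`, and the limit follows from the continuity of `ρ_diff*` on `(0,1)²`.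
-/

open Equiv Fintype
open scoped BigOperators

section PermSums

variable {α : Type*} [Fintype α] [DecidableEq α]

theorem sum_perm_apply_eq (f : α → ℝ) (i j : α) :
    ∑ σ : Perm α, f (σ i) = ∑ σ : Perm α, f (σ j) := by
  rw [← Equiv.sum_comp (Equiv.mulRight (swap i j))]
  simp [Perm.mul_apply]

theorem card_mul_sum_perm_apply (f : α → ℝ) (i : α) :
    (card α : ℝ) * ∑ σ : Perm α, f (σ i) = (card α).factorial * ∑ a, f a := by
  calc (card α : ℝ) * ∑ σ : Perm α, f (σ i)
      = ∑ j : α, ∑ σ : Perm α, f (σ j) := by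
        simp [sum_perm_apply_eq f _ i, Finset.card_univ]
    _ = ∑ σ : Perm α, ∑ a, f a := by
        rw [Finset.sum_comm]
        exact Finset.sum_congr rfl fun σ _ => Equiv.sum_comp σ f
    _ = (card α).factorial * ∑ a, f a := by simp [Fintype.card_perm]

theorem sum_perm_apply_mul_apply_eq (g : α → α → ℝ) {i j k : α} (hj : j ≠ i) (hk : k ≠ i) :
    ∑ σ : Perm α, g (σ i) (σ j) = ∑ σ : Perm α, g (σ i) (σ k) := by
  rw [← Equiv.sum_comp (Equiv.mulRight (swap j k))]
  simp [Perm.mul_apply, swap_apply_of_ne_of_ne hj.symm hk.symm]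

/-- The `card α - 1` off-diagonal terms are all equal, and together with the diagonal term they
sum to `b (σ i) * ∑ k, b (σ k) = 0`. -/
theorem card_sub_one_mul_sum_perm_apply_mul_apply (b : α → ℝ) (hb : ∑ a, b a = 0)
    {i j : α} (hij : i ≠ j) :
    ((card α : ℝ) - 1) * ∑ σ : Perm α, b (σ i) * b (σ j) = -∑ σ : Perm α, b (σ i) ^ 2 := by
  have hcard : ((Finset.univ.erase i).card : ℝ) = (card α : ℝ) - 1 := by
    rw [Finset.card_erase_of_mem (Finset.mem_univ i), Finset.card_univ,
      Nat.cast_sub (Fintype.card_pos_iff.2 ⟨i⟩)]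
    simp
  calc ((card α : ℝ) - 1) * ∑ σ : Perm α, b (σ i) * b (σ j)
      = ∑ k ∈ Finset.univ.erase i, ∑ σ : Perm α, b (σ i) * b (σ k) := by
        rw [← hcard, ← nsmul_eq_mul, ← Finset.sum_const]
        refine Finset.sum_congr rfl fun k hk => ?_
        exact sum_perm_apply_mul_apply_eq (fun x y => b x * b y) hij.symm
          (Finset.ne_of_mem_erase hk)
    _ = ∑ σ : Perm α, b (σ i) * (∑ k, b (σ k) - b (σ i)) := by
        rw [Finset.sum_comm]
        refine Finset.sum_congr rfl fun σ _ => ?_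
        rw [← Finset.mul_sum, Finset.sum_erase_eq_sub (Finset.mem_univ i)]
    _ = -∑ σ : Perm α, b (σ i) ^ 2 := by
        simp only [Equiv.sum_comp, hb, ← Finset.sum_neg_distrib]
        exact Finset.sum_congr rfl fun σ _ => by ring

end PermSums

theorem tendsto_nat_floor_natCast_mul_div {a : ℝ} (ha : 0 ≤ a) :
    Tendsto (fun n : ℕ => (⌊(n : ℝ) * a⌋₊ : ℝ) / n) atTop (𝓝 a) := by
  simpa only [Function.comp_def, mul_comm a] using
    (tendsto_nat_floor_mul_div_atTop ha).comp tendsto_natCast_atTop_atTop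

namespace RING

variable {n : ℕ}

theorem pexp_eq_expect (f : Perm (Fin n) → ℝ) : pexp n f = 𝔼 σ, f σ := by
  rw [pexp, Finset.expect_eq_sum_div_card, Finset.card_univ, card_perm, Fintype.card_fin]

theorem pexp_const_mul_add (a c : ℝ) (F : Perm (Fin n) → ℝ) :
    pexp n (fun σ => a * F σ + c) = a * pexp n F + c := by
  simp [pexp_eq_expect, Finset.expect_add_distrib, Finset.mul_expect]

theorem pexp_sum {ι : Type*} (s : Finset ι) (F : ι → Perm (Fin n) → ℝ) :
    pexp n (fun σ => ∑ i ∈ s, F i σ) = ∑ i ∈ s, pexp n (F i) := by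
  simp only [pexp_eq_expect]
  exact Finset.expect_sum_comm _ _ _

theorem pcov_const_mul_add (a c b d : ℝ) (F G : Perm (Fin n) → ℝ) :
    pcov n (fun σ => a * F σ + c) (fun σ => b * G σ + d) = a * b * pcov n F G := by
  have hscale := pexp_const_mul_add (a * b) 0 fun σ => (F σ - pexp n F) * (G σ - pexp n G)
  simp only [add_zero] at hscale
  simp only [pcov, pexp_const_mul_add, ← hscale]
  congr 1
  funext σ
  ring

theorem pcov_comm (F G : Perm (Fin n) → ℝ) : pcov n F G = pcov n G F := by
  simp only [pcov, mul_comm]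

theorem pexp_apply (f : Fin n → ℝ) (i : Fin n) :
    pexp n (fun σ => f (σ i)) = (∑ a, f a) / n := by
  have hn : (n : ℝ) ≠ 0 := by exact_mod_cast i.pos.ne'
  have key := card_mul_sum_perm_apply f i
  rw [Fintype.card_fin] at key
  rw [pexp, div_eq_div_iff (by positivity) hn]
  linarith

theorem pexp_apply_mul_apply (b : Fin n → ℝ) (hb : ∑ a, b a = 0) (i j : Fin n) :
    pexp n (fun σ => b (σ i) * b (σ j))
      = if i = j then (∑ a, b a ^ 2) / n else -(∑ a, b a ^ 2) / (n * (n - 1)) := by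
  split_ifs with hij
  · subst hij
    simp only [← sq]
    exact pexp_apply (fun a => b a ^ 2) i
  · have hn : (2 : ℝ) ≤ n := by
      have := Fintype.one_lt_card_iff.2 ⟨i, j, hij⟩
      rw [Fintype.card_fin] at this
      exact_mod_cast this
    have hcross := card_sub_one_mul_sum_perm_apply_mul_apply b hb hij
    have hdiag := card_mul_sum_perm_apply (fun a => b a ^ 2) i
    rw [Fintype.card_fin] at hcross hdiag
    rw [pexp, div_eq_div_iff (by positivity) (by nlinarith)]
    linear_combination (n : ℝ) * hcross - hdiag

theorem pcov_sum_apply (hn : 2 ≤ n) (b : Fin n → ℝ) (hb : ∑ a, b a = 0)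
    (A B : Finset (Fin n)) :
    pcov n (fun σ => ∑ i ∈ A, b (σ i)) (fun σ => ∑ j ∈ B, b (σ j))
      = (n * #(A ∩ B) - #A * #B) * (∑ a, b a ^ 2) / (n * (n - 1)) := by
  have hn' : (n : ℝ) - 1 ≠ 0 := by
    have : (2 : ℝ) ≤ n := by exact_mod_cast hn
    linarith
  have hmean (C : Finset (Fin n)) : pexp n (fun σ => ∑ i ∈ C, b (σ i)) = 0 := by
    simp [pexp_sum, pexp_apply, hb]
  have hterm (i j : Fin n) :
      pexp n (fun σ => b (σ i) * b (σ j))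
        = -(∑ a, b a ^ 2) / (n * (n - 1)) + if i = j then (∑ a, b a ^ 2) / (n - 1) else 0 := by
    rw [pexp_apply_mul_apply b hb]
    split_ifs
    · field_simp
      ring
    · ring
  simp only [pcov, hmean, sub_zero, Finset.sum_mul_sum, pexp_sum, hterm, Finset.sum_add_distrib,
    Finset.sum_const, Finset.sum_ite_eq, Finset.sum_ite_mem, nsmul_eq_mul]
  field_simp
  ring

theorem Udiff_zero_eq (R : Fin n → Fin n → ℝ) (hsym : ∀ i j, R i j = R j i)
    (π : Perm (Fin n)) (t : ℕ) :
    Udiff n R π 0 t = 2 * ∑ i ∈ {i : Fin n | (i : ℕ) < t}, ∑ b, R (π i) b - ∑ a, ∑ b, R a b := by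
  have hsplit (i j : Fin n) :
      ((if 0 ≤ (i : ℕ) ∧ (i : ℕ) < t ∧ 0 ≤ (j : ℕ) ∧ (j : ℕ) < t then R (π i) (π j) else 0)
        - if ((i : ℕ) < 0 ∨ t ≤ (i : ℕ)) ∧ ((j : ℕ) < 0 ∨ t ≤ (j : ℕ)) then R (π i) (π j) else 0)
      = (if (i : ℕ) < t then R (π i) (π j) else 0) + (if (j : ℕ) < t then R (π j) (π i) else 0)
        - R (π i) (π j) := by
    rw [hsym (π j)]
    split_ifs <;> first | ring1 | omega
  have hswap : ∑ i : Fin n, ∑ j : Fin n, (if (j : ℕ) < t then R (π j) (π i) else 0)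
      = ∑ i : Fin n, ∑ j : Fin n, (if (i : ℕ) < t then R (π i) (π j) else 0) :=
    Finset.sum_comm
  have hrow (i : Fin n) : ∑ j, R (π i) (π j) = ∑ b, R (π i) b := Equiv.sum_comp π _
  simp only [Udiff, U1, U2, ← Finset.sum_sub_distrib, hsplit]
  simp only [Finset.sum_sub_distrib, Finset.sum_add_distrib]
  rw [hswap]
  simp only [Finset.sum_ite_irrel, Finset.sum_const_zero, ← Finset.sum_filter, hrow,
    Equiv.sum_comp π (fun a => ∑ b, R a b)]
  ring

theorem pcov_Udiff (hn : 2 ≤ n) (R : Fin n → Fin n → ℝ) (hsym : ∀ i j, R i j = R j i)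
    {s t : ℕ} (hst : s ≤ t) (htn : t ≤ n) :
    pcov n (fun π => Udiff n R π 0 s) (fun π => Udiff n R π 0 t)
      = s * (n - t) *
        (4 * (∑ a, (∑ b, R a b - (∑ c, ∑ b, R c b) / n) ^ 2) / (n * (n - 1))) := by
  set m := (∑ c, ∑ b, R c b) / n
  set dev : Fin n → ℝ := fun a => ∑ b, R a b - m
  have hdev : ∑ a, dev a = 0 := by
    simp only [dev, Finset.sum_sub_distrib, Finset.sum_const, Finset.card_univ,
      Fintype.card_fin, nsmul_eq_mul, m]
    field_simp
    ring
  have hUdiff (r : ℕ) (hr : r ≤ n) : (fun π => Udiff n R π 0 r)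
      = fun π => 2 * ∑ i ∈ {i : Fin n | (i : ℕ) < r}, dev (π i)
        + (2 * r * m - ∑ a, ∑ b, R a b) := by
    funext π
    simp only [Udiff_zero_eq R hsym, dev, Finset.sum_sub_distrib, Finset.sum_const,
      Fin.card_filter_val_lt, min_eq_right hr, nsmul_eq_mul]
    ring
  have hinter : Finset.univ.filter (fun i : Fin n => (i : ℕ) < s)
      ∩ Finset.univ.filter (fun i : Fin n => (i : ℕ) < t)
      = Finset.univ.filter (fun i : Fin n => (i : ℕ) < s) :=
    Finset.inter_eq_left.2 fun i hi => by
      simp only [Finset.mem_filter, Finset.mem_univ, true_and] at hi ⊢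
      omega
  rw [hUdiff s (hst.trans htn), hUdiff t htn, pcov_const_mul_add, pcov_sum_apply hn dev hdev,
    hinter, Fin.card_filter_val_lt, Fin.card_filter_val_lt, min_eq_right (hst.trans htn),
    min_eq_right htn]
  ring

theorem pvar_eq_pcov (F : Perm (Fin n) → ℝ) : pvar n F = pcov n F F := by
  simp only [pvar, pcov, sq]

theorem pcov_standardize (F G : Perm (Fin n) → ℝ) (a b : ℝ) :
    pcov n (fun π => (F π - pexp n F) / a) (fun π => (G π - pexp n G) / b)
      = pcov n F G / (a * b) := by
  have hdiv (H : Perm (Fin n) → ℝ) (c : ℝ) :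
      (fun π => (H π - pexp n H) / c) = fun π => c⁻¹ * H π + -(pexp n H / c) := by
    funext π
    ring
  rw [hdiv F a, hdiv G b, pcov_const_mul_add]
  ring

theorem rhoDiff_comm (x y : ℝ) : rhoDiff x y = rhoDiff y x := by
  simp only [rhoDiff, min_comm, max_comm]

theorem continuousAt_rhoDiff {u v : ℝ} (hu : u ∈ Set.Ioo (0 : ℝ) 1) (hv : v ∈ Set.Ioo (0 : ℝ) 1) :
    ContinuousAt (Function.uncurry rhoDiff) (u, v) := by
  have hmin : min u v ∈ Set.Ioo (0 : ℝ) 1 := ⟨lt_min hu.1 hv.1, (min_le_left u v).trans_lt hu.2⟩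
  have hmax : max u v ∈ Set.Ioo (0 : ℝ) 1 := ⟨hu.1.trans_le (le_max_left u v), max_lt hu.2 hv.2⟩
  have hden : Real.sqrt (min u v * (1 - min u v) * (max u v * (1 - max u v))) ≠ 0 :=
    Real.sqrt_ne_zero'.2 <|
      mul_pos (mul_pos hmin.1 (sub_pos.2 hmin.2)) (mul_pos hmax.1 (sub_pos.2 hmax.2))
  unfold Function.uncurry rhoDiff
  exact ContinuousAt.div (by fun_prop) (by fun_prop) hden

theorem div_sqrt_mul_sqrt_eq_rhoDiff {s t N κ : ℝ} (hs : 0 ≤ s) (hst : s ≤ t) (htN : t ≤ N)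
    (hN : 0 < N) (hκ : 0 < κ) :
    s * (N - t) * κ / (Real.sqrt (s * (N - s) * κ) * Real.sqrt (t * (N - t) * κ))
      = rhoDiff (s / N) (t / N) := by
  have hvs : 0 ≤ s * (N - s) := mul_nonneg hs (by linarith)
  have hvt : 0 ≤ t * (N - t) := mul_nonneg (hs.trans hst) (by linarith)
  have hden : Real.sqrt (s * (N - s) * κ) * Real.sqrt (t * (N - t) * κ)
      = Real.sqrt (s * (N - s) * (t * (N - t))) * κ := by
    rw [← Real.sqrt_mul (mul_nonneg hvs hκ.le),
      show s * (N - s) * κ * (t * (N - t) * κ) = s * (N - s) * (t * (N - t)) * κ ^ 2 by ring,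
      Real.sqrt_mul (mul_nonneg hvs hvt), Real.sqrt_sq hκ.le]
  have hscaled : s / N * (1 - s / N) * (t / N * (1 - t / N))
      = s * (N - s) * (t * (N - t)) / (N ^ 2) ^ 2 := by
    field_simp
  rw [rhoDiff, min_eq_left (div_le_div_of_nonneg_right hst hN.le),
    max_eq_right (div_le_div_of_nonneg_right hst hN.le), hscaled, Real.sqrt_div' _ (by positivity),
    Real.sqrt_sq (by positivity), hden, mul_div_mul_right _ _ hκ.ne',
    show s / N * (1 - t / N) = s * (N - t) / N ^ 2 by field_simp,
    div_div_div_cancel_right₀ (by positivity)]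

theorem pcov_Zdiff (hn : 2 ≤ n) (R : Fin n → Fin n → ℝ) (hsym : ∀ i j, R i j = R j i)
    {s t : ℕ} (hsn : s ≤ n) (htn : t ≤ n) (hs : 0 < pvar n (fun π => Udiff n R π 0 s))
    (ht : 0 < pvar n (fun π => Udiff n R π 0 t)) :
    pcov n (fun π => Zdiff n R π 0 s) (fun π => Zdiff n R π 0 t) = rhoDiff (s / n) (t / n) := by
  wlog hst : s ≤ t generalizing s t
  · rw [pcov_comm, rhoDiff_comm]
    exact this htn hsn ht hs (le_of_not_ge hst)
  have hpvar (r : ℕ) (hr : r ≤ n) := pvar_eq_pcov (n := n) (fun π => Udiff n R π 0 r) ▸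
    pcov_Udiff hn R hsym le_rfl hr
  have hsn' : (s : ℝ) ≤ n := by exact_mod_cast hsn
  rw [hpvar s hsn] at hs
  simp only [Zdiff]
  rw [pcov_standardize, pcov_Udiff hn R hsym hst htn, hpvar s hsn, hpvar t htn]
  exact div_sqrt_mul_sqrt_eq_rhoDiff (Nat.cast_nonneg s) (by exact_mod_cast hst)
    (by exact_mod_cast htn) (by positivity)
    (pos_of_mul_pos_right hs (mul_nonneg (Nat.cast_nonneg s) (sub_nonneg.2 hsn')))

end RING

theorem stmt14_general (R : (n : ℕ) → Fin n → Fin n → ℝ)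
    (hsym : ∀ n (i j : Fin n), R n i j = R n j i)
    (u v : ℝ) (hu : u ∈ Set.Ioo (0 : ℝ) 1) (hv : v ∈ Set.Ioo (0 : ℝ) 1)
    (hvar : ∀ᶠ n in atTop,
      (0 < pvar n (fun π => Uw n (R n) π 0 ⌊(n : ℝ) * u⌋₊)
        ∧ 0 < pvar n (fun π => Udiff n (R n) π 0 ⌊(n : ℝ) * u⌋₊))
      ∧ (0 < pvar n (fun π => Uw n (R n) π 0 ⌊(n : ℝ) * v⌋₊)
        ∧ 0 < pvar n (fun π => Udiff n (R n) π 0 ⌊(n : ℝ) * v⌋₊))) :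
    Tendsto
      (fun n =>
        pcov n (fun π => Zdiff n (R n) π 0 ⌊(n : ℝ) * u⌋₊)
          (fun π => Zdiff n (R n) π 0 ⌊(n : ℝ) * v⌋₊))
      atTop (𝓝 (rhoDiff u v)) := by
  have hfloor_le {w : ℝ} (hw : w ∈ Set.Ioo (0 : ℝ) 1) (n : ℕ) : ⌊(n : ℝ) * w⌋₊ ≤ n :=
    Nat.floor_le_of_le (mul_le_of_le_one_right n.cast_nonneg hw.2.le)
  have hlim : Tendsto (fun n : ℕ => rhoDiff (⌊(n : ℝ) * u⌋₊ / n) (⌊(n : ℝ) * v⌋₊ / n)) atTop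
      (𝓝 (rhoDiff u v)) :=
    (continuousAt_rhoDiff hu hv).tendsto.comp <|
      (tendsto_nat_floor_natCast_mul_div hu.1.le).prodMk_nhds
        (tendsto_nat_floor_natCast_mul_div hv.1.le)
  refine hlim.congr' ?_
  filter_upwards [hvar, eventually_ge_atTop 2] with n hpos hn
  exact (pcov_Zdiff hn (R n) (hsym n) (hfloor_le hu n) (hfloor_le hv n) hpos.1.2 hpos.2.2).symm

/-- Under Conditions (C1)–(C6), for all fixed `u, v ∈ (0,1)`, the covariance of
`Z_diff^π(⌊n·u⌋)` and `Z_diff^π(⌊n·v⌋)` under the permutation null converges to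
`ρ_diff*(u,v) = (u∧v)(1−(u∨v))/√((u∧v)(1−(u∧v))·(u∨v)(1−(u∨v)))`. -/
theorem stmt14 (R : (n : ℕ) → Fin n → Fin n → ℝ)
    (hsym : ∀ n (i j : Fin n), R n i j = R n j i) (hdiag : ∀ n (i : Fin n), R n i i = 0)
    (hC1 : Cond1 R) (hC2 : Cond2 R) (hC3 : Cond3 R) (hC4 : Cond4 R)
    (hC5 : Cond5 R) (hC6 : Cond6 R)
    (u v : ℝ) (hu : u ∈ Set.Ioo (0 : ℝ) 1) (hv : v ∈ Set.Ioo (0 : ℝ) 1)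
    (hvar : ∀ᶠ n in atTop,
      (0 < pvar n (fun π => Uw n (R n) π 0 ⌊(n : ℝ) * u⌋₊)
        ∧ 0 < pvar n (fun π => Udiff n (R n) π 0 ⌊(n : ℝ) * u⌋₊))
      ∧ (0 < pvar n (fun π => Uw n (R n) π 0 ⌊(n : ℝ) * v⌋₊)
        ∧ 0 < pvar n (fun π => Udiff n (R n) π 0 ⌊(n : ℝ) * v⌋₊))) :
    Tendsto
      (fun n =>
        pcov n (fun π => Zdiff n (R n) π 0 ⌊(n : ℝ) * u⌋₊)
          (fun π => Zdiff n (R n) π 0 ⌊(n : ℝ) * v⌋₊))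
      atTop (𝓝 (rhoDiff u v)) :=
  stmt14_general R hsym u v hu hv hvar
end
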